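/- arXiv:1609.03001 — 12 statements merged into one kernel-verified Lean document; each statement's English description precedes it below -/
import Mathlib

section
/- Let n be even, k an odd positive integer, and B_n the addition table of Z_n. Then B_n has no k-plex, i.e., there is no set of kn cells with exactly k cells in each row, exactly k cells in each column, and each symbol occurring exactly k times. -/
/-!
Sum the entries of a `k`-plex of `B_n` in `ℤ/n`. Since each symbol occurs `k` times, the sum is
`k • S`, where `S = ∑ a = n(n-1)/2` is the sum of all elements of `ℤ/n`; since each row and each
column index also occurs `k` times and every entry is the sum of its two indices, it is
`k • S + k • S` as well. Hence `k • S = 0`, i.e. `n ∣ k · n(n-1)/2`. Writing `n = 2m`, this says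
`2m ∣ k · m(2m-1)`, so `2 ∣ k(2m-1)`, which is impossible for odd `k`.
-/

open scoped Classical

/-- A latin square of order `n`: each symbol occurs exactly once in each row and column. -/
def IsLatinSquare {n : ℕ} (L : Fin n → Fin n → Fin n) : Prop :=
  (∀ i, Function.Bijective fun j => L i j) ∧ (∀ j, Function.Bijective fun i => L i j)

/-- A `k`-plex of `L`: a set of cells with exactly `k` in each row, `k` in each column,
and each symbol occurring exactly `k` times. -/
def IsPlex {n : ℕ} (L : Fin n → Fin n → Fin n) (k : ℕ) (K : Finset (Fin n × Fin n)) : Prop :=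
  (∀ i, (K.filter fun p => p.1 = i).card = k) ∧
  (∀ j, (K.filter fun p => p.2 = j).card = k) ∧
  (∀ s, (K.filter fun p => L p.1 p.2 = s).card = k)

/-- `L` has a transversal, i.e. a `1`-plex. -/
def HasTransversal {n : ℕ} (L : Fin n → Fin n → Fin n) : Prop :=
  ∃ K, IsPlex L 1 K

open Finset

theorem Finset.sum_comp_eq_nsmul_sum_univ {ι κ M : Type*} [Fintype κ] [DecidableEq κ]
    [AddCommMonoid M] (s : Finset ι) (g : ι → κ) (f : κ → M) {k : ℕ}
    (hg : ∀ b, #{a ∈ s | g a = b} = k) :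
    ∑ a ∈ s, f (g a) = k • ∑ b, f b := by
  rw [← sum_fiberwise' s g f, smul_sum]
  exact sum_congr rfl fun b _ => by rw [sum_const, hg b]

theorem IsPlex.nsmul_sum_eq_zero_of_map_add {n k : ℕ} {K : Finset (Fin n × Fin n)}
    (hK : IsPlex (fun i j : Fin n => i + j) k K) {G : Type*} [AddCommGroup G] (φ : Fin n → G)
    (hφ : ∀ a b, φ (a + b) = φ a + φ b) : k • ∑ a, φ a = 0 := by
  obtain ⟨hrow, hcol, hsym⟩ := hK
  have hfst : ∑ p ∈ K, φ p.1 = k • ∑ a, φ a := sum_comp_eq_nsmul_sum_univ K Prod.fst φ hrow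
  have hsnd : ∑ p ∈ K, φ p.2 = k • ∑ a, φ a := sum_comp_eq_nsmul_sum_univ K Prod.snd φ hcol
  have hadd : ∑ p ∈ K, φ (p.1 + p.2) = k • ∑ a, φ a := sum_comp_eq_nsmul_sum_univ K _ φ hsym
  simp only [hφ, sum_add_distrib, hfst, hsnd] at hadd
  exact add_eq_right.mp hadd

theorem Fin.natCast_val_add {n : ℕ} (a b : Fin n) : (((a + b : Fin n) : ℕ) : ZMod n) = a + b := by
  rw [Fin.val_add, ZMod.natCast_mod, Nat.cast_add]

theorem Fin.sum_univ_natCast_val (n : ℕ) :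
    ∑ a : Fin n, ((a : ℕ) : ZMod n) = ((n * (n - 1) / 2 : ℕ) : ZMod n) := by
  rw [Fin.sum_univ_eq_sum_range (fun i => (i : ZMod n)), ← Nat.cast_sum, sum_range_id]

theorem not_dvd_mul_triangle_of_even_of_odd {n k : ℕ} (hn0 : n ≠ 0) (hn : Even n) (hk : Odd k) :
    ¬ n ∣ k * (n * (n - 1) / 2) := by
  obtain ⟨m, rfl⟩ := hn
  have hm : 0 < m := by omega
  have htriangle : (m + m) * (m + m - 1) / 2 = m * (m + m - 1) := by
    rw [← two_mul, mul_assoc, Nat.mul_div_cancel_left _ two_pos]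
  rw [htriangle]
  intro hdvd
  have hdvd' : m * 2 ∣ m * (k * (m + m - 1)) := by rwa [mul_two, mul_left_comm]
  have hodd : Odd (k * (m + m - 1)) :=
    hk.mul (Nat.Even.sub_odd (by omega) (Even.add_self m) odd_one)
  exact Nat.not_even_iff_odd.mpr hodd (even_iff_two_dvd.mpr (Nat.dvd_of_mul_dvd_mul_left hm hdvd'))

theorem stmt1 (n k : ℕ) (hpos : 0 < n) (hn : Even n) (hk : Odd k) :
    ¬ ∃ K, IsPlex (fun i j : Fin n => i + j) k K := by
  rintro ⟨K, hK⟩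
  have hzero := hK.nsmul_sum_eq_zero_of_map_add (fun a => ((a : ℕ) : ZMod n)) Fin.natCast_val_add
  rw [Fin.sum_univ_natCast_val, nsmul_eq_mul, ← Nat.cast_mul, ZMod.natCast_eq_zero_iff] at hzero
  exact not_dvd_mul_triangle_of_even_of_odd hpos.ne' hn hk hzero
end

section
/- Let n = bm where b is even and m is odd, and let L be a latin square of order n indexed by {0,...,n-1} such that ⌊L[i][j]/m⌋ ≡ ⌊i/m⌋ + ⌊j/m⌋ (mod b) for all i,j. Then L has no k-plex for any odd positive integer k. -/
/-!
Weight each index `s` by its block number `⌊s/m⌋ ∈ ZMod b`. Summing the weight of the symbol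
over the cells of a `k`-plex counts every block number `k` times, and so does summing the
weight of the row or of the column. The step-type congruence says symbol weight = row weight +
column weight, so `k • S = 2 • (k • S)`, i.e. `k • S = 0` in `ZMod b`, where `S = ∑ₛ ⌊s/m⌋`.
But `S = m · b(b-1)/2`, and for even `b` and odd `k m` the number `k S` is an odd multiple
of `b/2`.
-/

open scoped Classical

open Finset

lemma Finset.sum_comp_eq_nsmul_of_card_fiber {ι α M : Type*} [Fintype α] [DecidableEq α]
    [AddCommMonoid M] (K : Finset ι) (g : ι → α) {k : ℕ} (h : ∀ a, #(K.filter fun p => g p = a) = k)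
    (F : α → M) : ∑ p ∈ K, F (g p) = k • ∑ a, F a := by
  rw [← sum_fiberwise_of_maps_to (fun p _ => mem_univ (g p)), smul_sum]
  refine sum_congr rfl fun a _ => ?_
  rw [sum_congr rfl fun p hp => congrArg F (mem_filter.mp hp).2, sum_const, h]

lemma IsPlex.nsmul_sum_eq_zero {n k : ℕ} {L : Fin n → Fin n → Fin n}
    {K : Finset (Fin n × Fin n)} (hK : IsPlex L k K) {M : Type*} [AddCommGroup M] {F : Fin n → M}
    (hF : ∀ i j, F (L i j) = F i + F j) : k • ∑ s, F s = 0 := by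
  obtain ⟨hrow, hcol, hsym⟩ := hK
  have h := calc
    k • ∑ s, F s = ∑ p ∈ K, F (L p.1 p.2) :=
      (sum_comp_eq_nsmul_of_card_fiber K (fun p => L p.1 p.2) hsym F).symm
    _ = ∑ p ∈ K, F p.1 + ∑ p ∈ K, F p.2 := by simp only [hF, sum_add_distrib]
    _ = k • ∑ s, F s + k • ∑ s, F s := by
      rw [sum_comp_eq_nsmul_of_card_fiber K Prod.fst hrow F,
        sum_comp_eq_nsmul_of_card_fiber K Prod.snd hcol F]
  exact left_eq_add.mp h

lemma sum_range_mul_div (b m : ℕ) :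
    ∑ i ∈ range (b * m), i / m = m * ∑ j ∈ range b, j := by
  induction b with
  | zero => simp
  | succ b ih =>
    rcases Nat.eq_zero_or_pos m with rfl | hm
    · simp
    have hblock : ∀ j ∈ range m, (b * m + j) / m = b := fun j hj => by
      rw [add_comm, Nat.add_mul_div_right _ _ hm, Nat.div_eq_of_lt (mem_range.mp hj), zero_add]
    rw [add_mul, one_mul, sum_range_add, sum_congr rfl hblock, ih, sum_range_succ, sum_const,
      card_range, smul_eq_mul, mul_add]

lemma not_dvd_odd_mul_sum_range {b q : ℕ} (hb : Even b) (hbpos : 0 < b) (hq : Odd q) :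
    ¬ b ∣ q * ∑ j ∈ range b, j := by
  obtain ⟨c, rfl⟩ := hb
  have hsum : ∑ j ∈ range (c + c), j = c * (2 * c - 1) := by
    have := sum_range_id_mul_two (c + c)
    rw [← two_mul] at this ⊢
    rw [show 2 * c * (2 * c - 1) = c * (2 * c - 1) * 2 by ring] at this
    exact Nat.eq_of_mul_eq_mul_right two_pos this
  have hodd : Odd (2 * c - 1) := ⟨c - 1, by omega⟩
  rw [hsum, ← two_mul, show q * (c * (2 * c - 1)) = c * (q * (2 * c - 1)) by ring]
  intro hdvd
  have htwo : 2 ∣ q * (2 * c - 1) :=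
    Nat.dvd_of_mul_dvd_mul_left (k := c) (by omega) (by rwa [mul_comm c 2])
  exact (Nat.not_even_iff_odd.mpr (hq.mul hodd)) (even_iff_two_dvd.mpr htwo)

theorem stmt3_general (b m n k : ℕ) (hb : Even b) (hbpos : 0 < b) (hm : Odd m)
    (hn : n = b * m) (L : Fin n → Fin n → Fin n)
    (hstep : ∀ i j : Fin n, (L i j : ℕ) / m ≡ (i : ℕ) / m + (j : ℕ) / m [MOD b])
    (hk : Odd k) :
    ¬ ∃ K, IsPlex L k K := by
  rintro ⟨K, hK⟩
  have hblock : ∀ i j : Fin n,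
      (((L i j : ℕ) / m : ℕ) : ZMod b) = ((i : ℕ) / m : ℕ) + ((j : ℕ) / m : ℕ) :=
    fun i j => by rw [← Nat.cast_add, ZMod.natCast_eq_natCast_iff]; exact hstep i j
  have hzero := hK.nsmul_sum_eq_zero (F := fun s => ((s / m : ℕ) : ZMod b)) hblock
  rw [← Nat.cast_sum, Fin.sum_univ_eq_sum_range (· / m), hn, sum_range_mul_div, nsmul_eq_mul,
    ← Nat.cast_mul, ZMod.natCast_eq_zero_iff, ← mul_assoc] at hzero
  exact not_dvd_odd_mul_sum_range hb hbpos (hk.mul hm) hzero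

theorem stmt3 (b m n k : ℕ) (hb : Even b) (hbpos : 0 < b) (hm : Odd m)
    (hn : n = b * m) (L : Fin n → Fin n → Fin n) (hL : IsLatinSquare L)
    (hstep : ∀ i j : Fin n, (L i j : ℕ) / m ≡ (i : ℕ) / m + (j : ℕ) / m [MOD b])
    (hk : Odd k) :
    ¬ ∃ K, IsPlex L k K :=
  stmt3_general b m n k hb hbpos hm hn L hstep hk
end

section
/- Let k be an odd positive integer and let n be even. If L is a latin square of order n that agrees with B_n (i.e., L[i][j] ≡ i+j mod n) in all rows i with 0 ≤ i < n − r for some nonnegative integer r satisfying k·r·(r−1) < n, then L has no k-plex. -/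
open scoped Classical

private lemma plex_sum {n k : ℕ} (K : Finset (Fin n × Fin n)) (φ : Fin n × Fin n → Fin n)
    (hφ : ∀ i, (K.filter fun p => φ p = i).card = k) (h : Fin n → ℤ) :
    ∑ p ∈ K, h (φ p) = k * ∑ i, h i := by
  classical
  rw [← Finset.sum_fiberwise_of_maps_to (fun x _ => Finset.mem_univ (φ x)) (fun p => h (φ p)),
    Finset.mul_sum]
  refine Finset.sum_congr rfl fun i _ => ?_
  rw [Finset.sum_congr rfl
      (fun p hp => by rw [(Finset.mem_filter.1 hp).2] :
        ∀ p ∈ K.filter fun p => φ p = i, h (φ p) = h i),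
    Finset.sum_const, hφ i, nsmul_eq_mul]

private lemma fin_sub_cast {n : ℕ} [NeZero n] (a b : Fin n) :
    ∃ t : ℤ, ((a - b).val : ℤ) = (a.val : ℤ) - b.val + n * t := by
  have h1 : (a - b).val = (n - b.val + a.val) % n := by rw [Fin.sub_def]
  obtain ⟨q, hq⟩ : ∃ q, n - b.val + a.val = n * q + (a - b).val :=
    ⟨(n - b.val + a.val) / n, by rw [h1]; exact (Nat.div_add_mod _ n).symm⟩
  have hb : (b.val : ℕ) ≤ n := b.isLt.le
  refine ⟨1 - (q : ℤ), ?_⟩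
  zify [hb] at hq
  linear_combination -hq

private lemma ite_sum {n r : ℕ} (hrn : r ≤ n) (d c : ℤ) :
    ∑ i ∈ Finset.range n, (if n - r ≤ i then c * ((n : ℤ) - d - (i : ℤ)) else 0) =
      ∑ j ∈ Finset.range r, c * ((r : ℤ) - d - (j : ℤ)) := by
  rw [Finset.range_eq_Ico, ← Finset.sum_Ico_consecutive _ (Nat.zero_le (n - r)) (Nat.sub_le n r),
    Finset.sum_eq_zero (fun i hi => if_neg (by have := (Finset.mem_Ico.1 hi).2; omega)), zero_add,
    Finset.sum_congr rfl (fun i hi => if_pos ((Finset.mem_Ico.1 hi).1)),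
    Finset.sum_Ico_eq_sum_range]
  have hnr : n - (n - r) = r := by omega
  rw [hnr]
  refine Finset.sum_congr rfl fun j hj => ?_
  have hc : ((n - r + j : ℕ) : ℤ) = (n : ℤ) - r + j := by push_cast [hrn]; ring
  rw [hc]; ring

theorem stmt4 (n k r : ℕ) (hpos : 0 < n) (hn : Even n) (hk : Odd k)
    (hkr : k * r * (r - 1) < n)
    (L : Fin n → Fin n → Fin n) (hL : IsLatinSquare L)
    (hagree : ∀ i j : Fin n, (i : ℕ) < n - r → L i j = i + j) :
    ¬ ∃ K, IsPlex L k K := by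
  classical
  rintro ⟨K, hK1, hK2, hK3⟩
  haveI : NeZero n := ⟨hpos.ne'⟩
  obtain ⟨m, hm⟩ := hn
  obtain ⟨a, ha⟩ := hk
  have hk1 : 1 ≤ k := by omega
  have hrn : r ≤ n := by
    by_contra hcon
    push_neg at hcon
    have h2 : 1 ≤ r - 1 := by omega
    have := Nat.mul_le_mul (Nat.mul_le_mul hk1 (le_refl r)) h2
    omega
  -- Claim A
  have hA : ∀ p : Fin n × Fin n, (p.1 : ℕ) < n - r → L p.1 p.2 - p.2 = p.1 := by
    intro p hp
    rw [hagree p.1 p.2 hp, add_sub_cancel_right]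
  -- Claim B
  have hB : ∀ p : Fin n × Fin n, ¬ ((p.1 : ℕ) < n - r) → n - r ≤ ((L p.1 p.2 - p.2 : Fin n) : ℕ) := by
    intro p hp
    by_contra hcon
    push_neg at hcon
    have h2 : L (L p.1 p.2 - p.2) p.2 = L p.1 p.2 := by
      rw [hagree _ p.2 hcon, sub_add_cancel]
    have h3 : (L p.1 p.2 - p.2 : Fin n) = p.1 := (hL.2 p.2).1 h2
    exact hp (h3 ▸ hcon)
  set T : ℤ := ∑ i : Fin n, (i.val : ℤ) with hT
  set D : ℤ := ∑ p ∈ K, (((L p.1 p.2 - p.2 : Fin n).val : ℤ) - (p.1.val : ℤ)) with hD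
  have hsum1 : ∑ p ∈ K, ((p.1.val : ℤ)) = k * T := by
    rw [hT]; exact plex_sum K (fun p => p.1) hK1 (fun i => (i.val : ℤ))
  have hsum2 : ∑ p ∈ K, ((p.2.val : ℤ)) = k * T := by
    rw [hT]; exact plex_sum K (fun p => p.2) hK2 (fun i => (i.val : ℤ))
  have hsum3 : ∑ p ∈ K, (((L p.1 p.2).val : ℤ)) = k * T := by
    rw [hT]; exact plex_sum K (fun p => L p.1 p.2) hK3 (fun i => (i.val : ℤ))
  have hE : ∑ p ∈ K, (((L p.1 p.2).val : ℤ) - (p.2.val : ℤ) - (p.1.val : ℤ)) = -(k * T) := by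
    rw [Finset.sum_sub_distrib, Finset.sum_sub_distrib, hsum3, hsum2, hsum1]; ring
  have hdvd : (n : ℤ) ∣ D + k * T := by
    have heq : D + k * T = ∑ p ∈ K,
        ((((L p.1 p.2 - p.2 : Fin n).val : ℤ) - (p.1.val : ℤ)) -
          (((L p.1 p.2).val : ℤ) - (p.2.val : ℤ) - (p.1.val : ℤ))) := by
      rw [Finset.sum_sub_distrib, hE, hD]; ring
    rw [heq]
    refine Finset.dvd_sum fun p _ => ?_
    obtain ⟨t, ht⟩ := fin_sub_cast (L p.1 p.2) p.2
    exact ⟨t, by linear_combination ht⟩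
  -- fiberwise decomposition and row bounds
  have hfib : D = ∑ i : Fin n, ∑ p ∈ K.filter (fun p => p.1 = i),
      (((L p.1 p.2 - p.2 : Fin n).val : ℤ) - (p.1.val : ℤ)) := by
    rw [hD]
    exact (Finset.sum_fiberwise_of_maps_to (fun x _ => Finset.mem_univ x.1) _).symm
  have hub : ∀ i : Fin n, ∑ p ∈ K.filter (fun p => p.1 = i),
      (((L p.1 p.2 - p.2 : Fin n).val : ℤ) - (p.1.val : ℤ)) ≤
      (if n - r ≤ (i : ℕ) then (k : ℤ) * ((n : ℤ) - 1 - ((i : ℕ) : ℤ)) else 0) := by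
    intro i
    by_cases hi : (i : ℕ) < n - r
    · rw [if_neg (by omega)]
      refine le_of_eq (Finset.sum_eq_zero fun p hp => ?_)
      have hp1 : p.1 = i := (Finset.mem_filter.1 hp).2
      rw [hA p (by rw [hp1]; exact hi), sub_self]
    · rw [if_pos (by omega)]
      have := Finset.sum_le_card_nsmul (K.filter (fun p => p.1 = i))
        (fun p => ((L p.1 p.2 - p.2 : Fin n).val : ℤ) - (p.1.val : ℤ))
        ((n : ℤ) - 1 - ((i : ℕ) : ℤ)) (fun p hp => by
          have hp1 : p.1 = i := (Finset.mem_filter.1 hp).2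
          have hv : ((L p.1 p.2 - p.2 : Fin n).val : ℤ) ≤ (n : ℤ) - 1 := by
            have := (L p.1 p.2 - p.2 : Fin n).isLt; omega
          have hpi : ((p.1 : Fin n).val : ℤ) = ((i : ℕ) : ℤ) := by rw [hp1]
          show ((L p.1 p.2 - p.2 : Fin n).val : ℤ) - (p.1.val : ℤ) ≤ (n : ℤ) - 1 - ((i : ℕ) : ℤ)
          linarith)
      rwa [hK1 i, nsmul_eq_mul] at this
  have hlb : ∀ i : Fin n,
      (if n - r ≤ (i : ℕ) then (k : ℤ) * ((n : ℤ) - r - ((i : ℕ) : ℤ)) else 0) ≤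
      ∑ p ∈ K.filter (fun p => p.1 = i),
        (((L p.1 p.2 - p.2 : Fin n).val : ℤ) - (p.1.val : ℤ)) := by
    intro i
    by_cases hi : (i : ℕ) < n - r
    · rw [if_neg (by omega)]
      refine ge_of_eq (Finset.sum_eq_zero fun p hp => ?_)
      have hp1 : p.1 = i := (Finset.mem_filter.1 hp).2
      rw [hA p (by rw [hp1]; exact hi), sub_self]
    · rw [if_pos (by omega)]
      have := Finset.card_nsmul_le_sum (K.filter (fun p => p.1 = i))
        (fun p => ((L p.1 p.2 - p.2 : Fin n).val : ℤ) - (p.1.val : ℤ))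
        ((n : ℤ) - r - ((i : ℕ) : ℤ)) (fun p hp => by
          have hp1 : p.1 = i := (Finset.mem_filter.1 hp).2
          have hv : ((n : ℤ) - r) ≤ ((L p.1 p.2 - p.2 : Fin n).val : ℤ) := by
            have hbb := hB p (by rw [hp1]; omega)
            have : ((n - r : ℕ) : ℤ) = (n : ℤ) - r := by push_cast [hrn]; ring
            omega
          have hpi : ((p.1 : Fin n).val : ℤ) = ((i : ℕ) : ℤ) := by rw [hp1]
          show ((n : ℤ) - r - ((i : ℕ) : ℤ)) ≤ ((L p.1 p.2 - p.2 : Fin n).val : ℤ) - (p.1.val : ℤ)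
          linarith)
      rwa [hK1 i, nsmul_eq_mul] at this
  -- Gauss sums
  have hG2 : (∑ j ∈ Finset.range r, (j : ℤ)) * 2 = (r : ℤ) * ((r : ℤ) - 1) := by
    rcases Nat.eq_zero_or_pos r with h | h
    · subst h; simp
    · have := Finset.sum_range_id_mul_two r
      zify [h] at this
      linarith [this]
  have hDub : 2 * D ≤ (k : ℤ) * (r : ℤ) * ((r : ℤ) - 1) := by
    have h1 : D ≤ ∑ i : Fin n,
        (if n - r ≤ (i : ℕ) then (k : ℤ) * ((n : ℤ) - 1 - ((i : ℕ) : ℤ)) else 0) := by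
      rw [hfib]; exact Finset.sum_le_sum fun i _ => hub i
    rw [Fin.sum_univ_eq_sum_range
      (fun i => if n - r ≤ i then (k : ℤ) * ((n : ℤ) - 1 - (i : ℤ)) else 0) n,
      ite_sum hrn 1 (k : ℤ)] at h1
    have h2 : ∑ j ∈ Finset.range r, (k : ℤ) * ((r : ℤ) - 1 - (j : ℤ)) =
        (k : ℤ) * ((r : ℤ) * ((r : ℤ) - 1) - ∑ j ∈ Finset.range r, (j : ℤ)) := by
      rw [← Finset.mul_sum]
      congr 1
      rw [Finset.sum_sub_distrib, Finset.sum_const, Finset.card_range, nsmul_eq_mul]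
    rw [h2] at h1
    nlinarith [hG2]
  have hDlb : -((k : ℤ) * (r : ℤ) * ((r : ℤ) - 1)) ≤ 2 * D := by
    have h1 : (∑ i : Fin n,
        (if n - r ≤ (i : ℕ) then (k : ℤ) * ((n : ℤ) - r - ((i : ℕ) : ℤ)) else 0)) ≤ D := by
      rw [hfib]; exact Finset.sum_le_sum fun i _ => hlb i
    rw [Fin.sum_univ_eq_sum_range
      (fun i => if n - r ≤ i then (k : ℤ) * ((n : ℤ) - r - (i : ℤ)) else 0) n,
      ite_sum hrn (r : ℤ) (k : ℤ)] at h1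
    have h2 : ∑ j ∈ Finset.range r, (k : ℤ) * ((r : ℤ) - r - (j : ℤ)) =
        (k : ℤ) * (-(∑ j ∈ Finset.range r, (j : ℤ))) := by
      rw [← Finset.mul_sum]
      congr 1
      rw [← Finset.sum_neg_distrib]
      exact Finset.sum_congr rfl fun j _ => by ring
    rw [h2] at h1
    nlinarith [hG2]
  -- final contradiction
  obtain ⟨c, hc⟩ := hdvd
  have hT2 : T * 2 = (n : ℤ) * ((n : ℤ) - 1) := by
    have h := Finset.sum_range_id_mul_two n
    have hTr : T = ∑ i ∈ Finset.range n, (i : ℤ) :=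
      Fin.sum_univ_eq_sum_range (fun i => (i : ℤ)) n
    rw [hTr]
    zify [hpos] at h
    linarith [h]
  have h2D : 2 * D = (n : ℤ) * (2 * c - (k : ℤ) * ((n : ℤ) - 1)) := by
    linear_combination 2 * hc - (k : ℤ) * hT2
  have hwodd : Odd (2 * c - (k : ℤ) * ((n : ℤ) - 1)) := by
    refine Even.sub_odd ⟨c, by ring⟩ ⟨2 * a * m + m - a - 1, ?_⟩
    have hm' : (n : ℤ) = 2 * m := by rw [hm]; push_cast; ring
    have ha' : (k : ℤ) = 2 * a + 1 := by rw [ha]; push_cast; ring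
    rw [hm', ha']; ring
  have hwne : 2 * c - (k : ℤ) * ((n : ℤ) - 1) ≠ 0 := by
    rcases hwodd with ⟨v, hv⟩; omega
  have hn0 : (0 : ℤ) < n := by exact_mod_cast hpos
  have hkr' : (k : ℤ) * (r : ℤ) * ((r : ℤ) - 1) < (n : ℤ) := by
    rcases Nat.eq_zero_or_pos r with h | h
    · subst h
      norm_num
      exact_mod_cast hpos
    · have hcast : ((k * r * (r - 1) : ℕ) : ℤ) = (k : ℤ) * (r : ℤ) * ((r : ℤ) - 1) := by
        push_cast [Nat.cast_sub h]
        ring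
      rw [← hcast]
      exact_mod_cast hkr
  rcases lt_trichotomy (2 * c - (k : ℤ) * ((n : ℤ) - 1)) 0 with hw | hw | hw
  · have hw1 : 2 * c - (k : ℤ) * ((n : ℤ) - 1) ≤ -1 := by omega
    have hmul : (n : ℤ) * (2 * c - (k : ℤ) * ((n : ℤ) - 1)) ≤ (n : ℤ) * (-1) :=
      mul_le_mul_of_nonneg_left hw1 hn0.le
    linarith
  · exact hwne hw
  · have hw1 : (1 : ℤ) ≤ 2 * c - (k : ℤ) * ((n : ℤ) - 1) := hw
    have hmul : (n : ℤ) * 1 ≤ (n : ℤ) * (2 * c - (k : ℤ) * ((n : ℤ) - 1)) :=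
      mul_le_mul_of_nonneg_left hw1 hn0.le
    linarith
end

section
/- Let n be even and suppose L is a latin square of order n that agrees with B_n (entries (i+j) mod n) in all rows with index less than n − ⌊√n⌋. Then L has no transversal. -/
open scoped Classical

/-!
A transversal selects a cell `(i, f i)` in every row, with `f` and `i ↦ L i (f i)` both
permutations, so the shifts `L i (f i) - f i ∈ ℤ/n` sum to `0`. In a row `i` that agrees with
`B_n` the shift is `i`. In a later row the shift is `≥ r` (as a residue in `[0, n)`), where `r`
is the number of agreeing rows: the symbols `t + j` with `t < r` already occur in column `j`.
Hence `n ∣ r(r-1)/2 + T` with `m r ≤ T ≤ m (n-1)`, where `m = n - r = ⌊√n⌋`. For even `n`,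
doubling puts `n + m² + m - 2(mn - T)` in `2nℤ`, yet this number lies strictly between
`0` and `2n` because `m² ≤ n`.
-/

open Finset Function

theorem Fin.natCast_val_sub {n : ℕ} (a b : Fin n) :
    (((a - b : Fin n) : ℕ) : ZMod n) = (a : ℕ) - (b : ℕ) := by
  rw [Fin.val_sub, ZMod.natCast_mod, Nat.cast_add, Nat.cast_sub b.isLt.le, ZMod.natCast_self]
  ring

theorem dvd_sum_val_sub_of_bijective {n : ℕ} {f g : Fin n → Fin n} (hf : Bijective f)
    (hg : Bijective g) : n ∣ ∑ i, ((g i - f i : Fin n) : ℕ) := by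
  rw [← ZMod.natCast_eq_zero_iff, Nat.cast_sum]
  simp only [Fin.natCast_val_sub, sum_sub_distrib]
  rw [hg.sum_comp fun x : Fin n => ((x : ℕ) : ZMod n),
    hf.sum_comp fun x : Fin n => ((x : ℕ) : ZMod n), sub_self]

theorem HasTransversal.exists_bijective {n : ℕ} {L : Fin n → Fin n → Fin n}
    (h : HasTransversal L) : ∃ f : Fin n → Fin n, Bijective f ∧ Bijective fun i => L i (f i) := by
  obtain ⟨K, hrow, hcol, hsym⟩ := h
  have hrow_mem : ∀ i, ∃ j, (i, j) ∈ K := fun i => by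
    obtain ⟨p, hp⟩ := card_pos.mp ((hrow i).symm ▸ Nat.one_pos)
    obtain ⟨hpK, rfl⟩ := mem_filter.mp hp
    exact ⟨p.2, hpK⟩
  choose f hf using hrow_mem
  have eq_of_card_eq_one : ∀ (P : Fin n × Fin n → Prop) [DecidablePred P],
      #(K.filter P) = 1 → ∀ a b, P (a, f a) → P (b, f b) → a = b := fun P _ hP a b ha hb =>
    congrArg Prod.fst <|
      card_le_one.mp hP.le _ (mem_filter.2 ⟨hf a, ha⟩) _ (mem_filter.2 ⟨hf b, hb⟩)
  have hf_inj : Injective f := fun a b hab => eq_of_card_eq_one _ (hcol (f a)) a b rfl hab.symm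
  have hg_inj : Injective fun i => L i (f i) := fun a b hab =>
    eq_of_card_eq_one _ (hsym (L a (f a))) a b rfl hab.symm
  exact ⟨f, Finite.injective_iff_bijective.mp hf_inj, Finite.injective_iff_bijective.mp hg_inj⟩

section AgreesWithCyclic

variable {n r : ℕ} {L : Fin n → Fin n → Fin n}
  (hagree : ∀ i j : Fin n, (i : ℕ) < r → L i j = i + j)
include hagree

theorem val_sub_eq_of_agree {i : Fin n} (hi : (i : ℕ) < r) (j : Fin n) :
    ((L i j - j : Fin n) : ℕ) = i := by
  have : NeZero n := NeZero.of_pos i.pos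
  rw [hagree i j hi, add_sub_cancel_right]

theorem le_val_sub_of_agree (hcol : ∀ j, Injective fun i => L i j) {i : Fin n}
    (hi : r ≤ (i : ℕ)) (j : Fin n) : r ≤ ((L i j - j : Fin n) : ℕ) := by
  have : NeZero n := NeZero.of_pos i.pos
  by_contra! ht
  have hsame : L (L i j - j) j = L i j := by rw [hagree _ j ht, sub_add_cancel]
  rw [hcol j hsame] at ht
  omega

theorem exists_dvd_sum_range_add_of_agree (hr : r ≤ n) (hcol : ∀ j, Injective fun i => L i j)
    {f : Fin n → Fin n} (hf : Bijective f) (hg : Bijective fun i => L i (f i)) :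
    ∃ T, (n - r) * r ≤ T ∧ T ≤ (n - r) * (n - 1) ∧ n ∣ ∑ k ∈ range r, k + T := by
  set t : ℕ → ℕ := fun k =>
    if h : k < n then ((L ⟨k, h⟩ (f ⟨k, h⟩) - f ⟨k, h⟩ : Fin n) : ℕ) else 0
  have hdvd := dvd_sum_val_sub_of_bijective hf hg
  have hsum : ∑ i, ((L i (f i) - f i : Fin n) : ℕ) = ∑ k ∈ range n, t k := by
    rw [← Fin.sum_univ_eq_sum_range]
    simp [t]
  have htop : ∑ k ∈ range r, t k = ∑ k ∈ range r, k := sum_congr rfl fun k hk => by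
    have hk : k < r := mem_range.mp hk
    simp only [t, dif_pos (hk.trans_le hr)]
    exact val_sub_eq_of_agree hagree (i := ⟨k, _⟩) hk _
  rw [hsum, ← sum_range_add_sum_Ico t hr, htop] at hdvd
  refine ⟨∑ k ∈ Ico r n, t k, ?_, ?_, hdvd⟩
  · simpa using card_nsmul_le_sum (Ico r n) t r fun k hk => by
      obtain ⟨hrk, hkn⟩ := mem_Ico.mp hk
      simp only [t, dif_pos hkn]
      exact le_val_sub_of_agree hagree hcol (i := ⟨k, hkn⟩) hrk _
  · simpa using sum_le_card_nsmul (Ico r n) t (n - 1) fun k hk => by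
      obtain ⟨-, hkn⟩ := mem_Ico.mp hk
      simp only [t, dif_pos hkn]
      exact Nat.le_sub_one_of_lt (Fin.isLt _)

end AgreesWithCyclic

theorem not_dvd_of_even_of_mul_self_le {n m S T : ℕ} (hn : Even n) (hm : 1 ≤ m)
    (hmn : m * m ≤ n) (hS : S * 2 = (n - m) * (n - m - 1)) (hT₁ : m * (n - m) ≤ T)
    (hT₂ : T ≤ m * (n - 1)) : ¬ n ∣ S + T := by
  rintro ⟨q, hq⟩
  obtain ⟨c, hc⟩ := hn
  have hm_lt : m < n := by
    rcases ((Nat.le_mul_of_pos_left m hm).trans hmn).lt_or_eq with h | rfl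
    · exact h
    · have : m ≤ 1 := Nat.le_of_mul_le_mul_left (by simpa using hmn) hm
      omega
  have hnm : 1 ≤ n - m := Nat.sub_pos_of_lt hm_lt
  zify [hm_lt.le, hnm, hm.trans hm_lt.le] at hS hT₁ hT₂ hq hc hmn hm
  have hdouble : (n + m * m + m - 2 * (m * n - T) : ℤ) = 2 * n * (q - c + 1) := by
    linear_combination 2 * hq - hS - n * hc
  have hlow : 0 < 2 * (n : ℤ) * (q - c + 1) := by rw [← hdouble]; nlinarith
  have hhigh : 2 * (n : ℤ) * (q - c + 1) < 2 * n * 1 := by rw [← hdouble]; nlinarith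
  have hd_pos := pos_of_mul_pos_right hlow (by positivity)
  have hd_lt := lt_of_mul_lt_mul_left hhigh (by positivity)
  omega

theorem stmt6 (n : ℕ) (hpos : 0 < n) (hn : Even n)
    (L : Fin n → Fin n → Fin n) (hL : IsLatinSquare L)
    (hagree : ∀ i j : Fin n, (i : ℕ) < n - Nat.sqrt n → L i j = i + j) :
    ¬ HasTransversal L := by
  intro hT
  obtain ⟨f, hf, hg⟩ := hT.exists_bijective
  obtain ⟨T, hT₁, hT₂, hdvd⟩ := exists_dvd_sum_range_add_of_agree hagree (Nat.sub_le n _)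
    (fun j => (hL.2 j).injective) hf hg
  rw [Nat.sub_sub_self (Nat.sqrt_le_self n)] at hT₁ hT₂
  exact not_dvd_of_even_of_mul_self_le hn (Nat.sqrt_pos.mpr hpos) (Nat.sqrt_le n)
    (sum_range_id_mul_two _) hT₁ hT₂ hdvd
end

section
/- Let k be odd and n = 2km with m ≥ 2, and define J = J_0 ∪ J_1 ∪ J_2 ∪ J_3 as a set of entries of B_n where J_0 = {(i, 2jm+i−1, i + (2jm+i−1) mod n) : 1 ≤ i ≤ m, 0 ≤ j ≤ k−1}, J_1 = {(i, 2jm+i, ...) : m ≤ i ≤ 2m−1, 0 ≤ j ≤ k−1}, J_2 = {(2m(2ℓ−1)+i, 2jm+i, ...) : 0 ≤ i ≤ 2m−1, 0 ≤ j ≤ k−1, 1 ≤ ℓ ≤ (k−1)/2}, J_3 = {(4mℓ+i, 2jm+i+1, ...) : 0 ≤ i ≤ 2m−1, 0 ≤ j ≤ k−1, 1 ≤ ℓ ≤ (k−1)/2} (columns taken mod n, symbol = row+column mod n). Then each column of B_n contains exactly k elements of J, each symbol appears in exactly k elements of J, and each row contains exactly k elements of J except row 0 which contains none and row m which contains 2k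 elements. -/
open scoped Classical

/-- The set `J = J₀ ∪ J₁ ∪ J₂ ∪ J₃` of cells of `Bₙ`, for `n = 2km`. -/
def InJ (k m n : ℕ) (p : Fin n × Fin n) : Prop :=
  (∃ i j, 1 ≤ i ∧ i ≤ m ∧ j < k ∧
    (p.1 : ℕ) = i ∧ (p.2 : ℕ) = (2 * j * m + i - 1) % n) ∨
  (∃ i j, m ≤ i ∧ i ≤ 2 * m - 1 ∧ j < k ∧
    (p.1 : ℕ) = i ∧ (p.2 : ℕ) = (2 * j * m + i) % n) ∨
  (∃ i j l, i ≤ 2 * m - 1 ∧ j < k ∧ 1 ≤ l ∧ l ≤ (k - 1) / 2 ∧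
    (p.1 : ℕ) = (2 * m * (2 * l - 1) + i) % n ∧ (p.2 : ℕ) = (2 * j * m + i) % n) ∨
  (∃ i j l, i ≤ 2 * m - 1 ∧ j < k ∧ 1 ≤ l ∧ l ≤ (k - 1) / 2 ∧
    (p.1 : ℕ) = (4 * m * l + i) % n ∧ (p.2 : ℕ) = (2 * j * m + i + 1) % n)

/-
Write a row as `2m·b + a` with `a < 2m`. Whether `(r, c)` lies in `J` depends only on the
block `b`, the offset `a` and `c mod 2m`, and in that form (`InJRes`) every count reduces to
one block of `2m` consecutive rows or columns. A row meets `k` columns for each admissible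
residue, and there is one admissible residue except in rows `0` (none) and `m` (two). In
each block every column residue is met by exactly one offset, so each column meets one cell
per block. For symbols `≡ t (mod 2m)`, block `0` contributes one cell, an odd block two cells
if `t` is even and none otherwise, an even block `b ≠ 0` the reverse; since `k` is odd the
`k - 1` nonzero blocks pair up and the total is `1 + (k - 1) = k`.
-/

open Finset

theorem card_filter_range_mul_div_mod (k q : ℕ) (P : ℕ → ℕ → Prop) [DecidableRel P] :
    #{x ∈ range (k * q) | P (x / q) (x % q)} = ∑ b ∈ range k, #{a ∈ range q | P b a} := by
  induction k with
  | zero => simp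
  | succ k ih =>
    rw [sum_range_succ, ← ih, card_filter, card_filter, card_filter, add_mul, one_mul,
      sum_range_add]
    congr 1
    refine sum_congr rfl fun a ha => ?_
    have hq : 0 < q := by have := mem_range.1 ha; omega
    rw [Nat.mul_add_mod_of_lt (mem_range.1 ha), mul_comm k q, Nat.mul_add_div hq,
      Nat.div_eq_of_lt (mem_range.1 ha), add_zero]

theorem Fin.card_filter_div_mod {n k q : ℕ} (hn : n = k * q) (P : ℕ → ℕ → Prop)
    [DecidableRel P] :
    #{x : Fin n | P (x / q) (x % q)} = ∑ b ∈ range k, #{a ∈ range q | P b a} := by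
  rw [card_filter, Fin.sum_univ_eq_sum_range fun x => if P (x / q) (x % q) then 1 else 0,
    ← card_filter, hn, card_filter_range_mul_div_mod]

theorem Fin.card_filter_mod {n k q : ℕ} (hn : n = k * q) (P : ℕ → Prop) [DecidablePred P] :
    #{x : Fin n | P (x % q)} = k * #{a ∈ range q | P a} := by
  rw [Fin.card_filter_div_mod hn fun _ a => P a, Finset.sum_const, card_range, smul_eq_mul]

theorem card_filter_range_eq_one {q x : ℕ} {P : ℕ → Prop} [DecidablePred P] (hx : x < q)
    (h : ∀ y < q, P y ↔ y = x) : #{y ∈ range q | P y} = 1 :=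
  card_eq_one.2 ⟨x, by ext y; simp only [mem_filter, mem_range, mem_singleton]; grind⟩

theorem card_filter_fst_eq {α β : Type*} [Fintype α] [Fintype β] [DecidableEq α]
    (P : α × β → Prop) [DecidablePred P] (a : α) :
    #{p ∈ univ.filter P | p.1 = a} = #{b | P (a, b)} :=
  card_nbij' Prod.snd (fun b => (a, b)) (by rintro ⟨x, y⟩; aesop)
    (by intro b; simp) (by intro p; simp +contextual [Prod.ext_iff]) (by intro b; simp)

theorem card_filter_snd_eq_graph {α β : Type*} [Fintype α] [Fintype β]
    (P Q : α × β → Prop) [DecidablePred P] [DecidablePred Q] (g : α → β)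
    (hQ : ∀ p, Q p ↔ p.2 = g p.1) :
    #{p ∈ univ.filter P | Q p} = #{a | P (a, g a)} :=
  card_nbij' Prod.fst (fun a => (a, g a)) (by rintro ⟨x, y⟩; aesop)
    (by intro a; simp [hQ]) (by intro p; simp +contextual [hQ, Prod.ext_iff])
    (by intro a; simp)

theorem eq_mul_add_iff {q r b a : ℕ} (ha : a < q) :
    r = q * b + a ↔ r / q = b ∧ r % q = a := by
  rw [Nat.div_mod_unique (by omega)]
  omega

theorem sub_add_mod_eq_ite {q a t : ℕ} (ha : a < q) (ht : t < q) :
    (q - a + t) % q = if a ≤ t then t - a else q - a + t := by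
  split_ifs with h
  · rw [show q - a + t = t - a + q by omega, Nat.add_mod_right, Nat.mod_eq_of_lt (by omega)]
  · exact Nat.mod_eq_of_lt (by omega)

theorem Fin.val_sub_mod_of_dvd {n q : ℕ} (hq : q ∣ n) (r s : Fin n) :
    ((s - r : Fin n) : ℕ) % q = (q - r % q + s % q) % q := by
  have hq0 : 0 < q := Nat.pos_of_dvd_of_pos hq (by have := r.isLt; omega)
  rw [Fin.val_sub, Nat.mod_mod_of_dvd _ hq, ← ZMod.natCast_eq_natCast_iff']
  push_cast [Nat.cast_sub r.isLt.le, Nat.cast_sub (Nat.mod_lt _ hq0).le, ZMod.natCast_mod,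
    ZMod.natCast_self, (ZMod.natCast_eq_zero_iff n q).2 hq]
  ring

/-- Row `2m·b + a` (`a < 2m`) and a column `≡ e (mod 2m)`; the disjuncts are `J₀`, `J₁`,
`J₂` (odd `b`) and `J₃` (even `b ≠ 0`). -/
def InJRes (m b a e : ℕ) : Prop :=
  (b = 0 ∧ 1 ≤ a ∧ a ≤ m ∧ e + 1 = a) ∨
  (b = 0 ∧ m ≤ a ∧ e = a) ∨
  (b % 2 = 1 ∧ e = a) ∨
  (b ≠ 0 ∧ b % 2 = 0 ∧ (e = a + 1 ∨ e + 2 * m = a + 1))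

section Coordinates

variable {k m n : ℕ}

theorem eq_mul_add_mod_iff (hn : n = 2 * k * m) {r b i : ℕ} (hb : b < k) (hi : i < 2 * m) :
    r = (2 * m * b + i) % n ↔ r / (2 * m) = b ∧ r % (2 * m) = i := by
  have : 2 * m * b + i < n := by
    rw [hn]
    nlinarith
  rw [Nat.mod_eq_of_lt this, eq_mul_add_iff hi]

theorem exists_eq_mul_add_mod_iff (hn : n = 2 * k * m) {c x : ℕ} (hc : c < n) (hx : x ≤ 2 * m) :
    (∃ j < k, c = (2 * j * m + x) % n) ↔ c % (2 * m) = x ∨ c % (2 * m) + 2 * m = x := by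
  have hm : 0 < m := Nat.pos_of_ne_zero fun h => by simp [h] at hn; omega
  have hdvd : 2 * m ∣ n := ⟨k, by rw [hn]; ring⟩
  constructor
  · rintro ⟨j, -, rfl⟩
    rw [Nat.mod_mod_of_dvd _ hdvd, show 2 * j * m + x = x + 2 * m * j by ring,
      Nat.add_mul_mod_self_left]
    rcases hx.lt_or_eq with hx | rfl
    · exact Or.inl (Nat.mod_eq_of_lt hx)
    · simp
  · have hcj := Nat.div_add_mod c (2 * m)
    have hj : c / (2 * m) < k := (Nat.div_lt_iff_lt_mul (by omega)).2 (by rw [hn] at hc; linarith)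
    rintro (h | h)
    · refine ⟨c / (2 * m), hj, ?_⟩
      rw [show 2 * (c / (2 * m)) * m + x = c by linarith, Nat.mod_eq_of_lt hc]
    · obtain ⟨j, hj'⟩ : ∃ j, c / (2 * m) = j + 1 ∨ (c / (2 * m) = 0 ∧ j + 1 = k) := by
        rcases Nat.eq_zero_or_pos (c / (2 * m)) with h0 | h0
        · exact ⟨k - 1, Or.inr ⟨h0, by omega⟩⟩
        · exact ⟨c / (2 * m) - 1, Or.inl (by omega)⟩
      refine ⟨j, by omega, ?_⟩
      rcases hj' with hj' | ⟨h0, hjk⟩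
      · rw [show 2 * j * m + x = c by rw [hj'] at hcj; linarith, Nat.mod_eq_of_lt hc]
      · have hx : x = 2 * m := by omega
        rw [show 2 * j * m + x = n by rw [hn, ← hjk, hx]; ring, Nat.mod_self]
        rw [h0] at hcj
        omega

theorem inJ_iff (hk : Odd k) (hn : n = 2 * k * m) (p : Fin n × Fin n) :
    InJ k m n p ↔ InJRes m (p.1 / (2 * m)) (p.1 % (2 * m)) (p.2 % (2 * m)) := by
  obtain ⟨τ, rfl⟩ := hk
  obtain ⟨⟨r, hr⟩, ⟨c, hc⟩⟩ := p
  have hm : 0 < m := Nat.pos_of_ne_zero fun h => by simp [h] at hn; omega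
  have hb : r / (2 * m) < 2 * τ + 1 :=
    (Nat.div_lt_iff_lt_mul (by omega)).2 (by rw [hn] at hr; linarith)
  have ha : r % (2 * m) < 2 * m := Nat.mod_lt _ (by omega)
  have row : ∀ {b i}, b < 2 * τ + 1 → i < 2 * m →
      (r = (2 * m * b + i) % n ↔ r / (2 * m) = b ∧ r % (2 * m) = i) :=
    eq_mul_add_mod_iff hn
  have row₀ : ∀ {i}, i < 2 * m → (r = i ↔ r / (2 * m) = 0 ∧ r % (2 * m) = i) :=
    fun hi => by simpa using eq_mul_add_iff (r := r) (b := 0) hi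
  have col : ∀ {x}, x ≤ 2 * m →
      ((∃ j < 2 * τ + 1, c = (2 * j * m + x) % n) ↔
        c % (2 * m) = x ∨ c % (2 * m) + 2 * m = x) :=
    exists_eq_mul_add_mod_iff hn hc
  simp only [InJ, InJRes]
  generalize r / (2 * m) = b at *
  generalize r % (2 * m) = a at *
  refine or_congr ?_ (or_congr ?_ (or_congr ?_ ?_))
  · constructor
    · rintro ⟨i, j, hi1, hi2, hj, rfl, hcol⟩
      rw [Nat.add_sub_assoc hi1] at hcol
      have := col (by omega) |>.1 ⟨j, hj, hcol⟩
      have := row₀ (by omega) |>.1 rfl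
      omega
    · rintro ⟨hb0, h1, h2, he⟩
      obtain ⟨j, hj, hcol⟩ := col (x := a - 1) (by omega) |>.2 (by omega)
      refine ⟨a, j, h1, h2, hj, row₀ ha |>.2 ⟨hb0, rfl⟩, ?_⟩
      rwa [Nat.add_sub_assoc h1]
  · constructor
    · rintro ⟨i, j, hi1, hi2, hj, rfl, hcol⟩
      have := col (by omega) |>.1 ⟨j, hj, hcol⟩
      have := row₀ (by omega) |>.1 rfl
      omega
    · rintro ⟨hb0, h1, he⟩
      obtain ⟨j, hj, hcol⟩ := col (x := a) (by omega) |>.2 (by omega)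
      exact ⟨a, j, h1, by omega, hj, row₀ ha |>.2 ⟨hb0, rfl⟩, hcol⟩
  · constructor
    · rintro ⟨i, j, l, hi, hj, hl1, hl2, hrow, hcol⟩
      have := col (by omega) |>.1 ⟨j, hj, hcol⟩
      have := row (by omega) (by omega) |>.1 hrow
      omega
    · rintro ⟨hb1, he⟩
      obtain ⟨j, hj, hcol⟩ := col (x := a) (by omega) |>.2 (by omega)
      exact ⟨a, j, (b + 1) / 2, by omega, hj, by omega, by omega,
        row (by omega) ha |>.2 ⟨by omega, rfl⟩, hcol⟩
  · simp only [show ∀ l, 4 * m * l = 2 * m * (2 * l) from fun l => by ring, add_assoc]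
    constructor
    · rintro ⟨i, j, l, hi, hj, hl1, hl2, hrow, hcol⟩
      have := col (by omega) |>.1 ⟨j, hj, hcol⟩
      have := row (by omega) (by omega) |>.1 hrow
      omega
    · rintro ⟨hb0, hb2, he⟩
      obtain ⟨j, hj, hcol⟩ := col (x := a + 1) (by omega) |>.2 he
      exact ⟨a, j, b / 2, by omega, hj, by omega, by omega,
        row (by omega) ha |>.2 ⟨by omega, rfl⟩, hcol⟩

end Coordinates

section Blocks

variable {m b a : ℕ}

theorem card_inJRes_zero_zero : #{e ∈ range (2 * m) | InJRes m 0 0 e} = 0 := by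
  rw [card_eq_zero, filter_eq_empty_iff]
  intro e he
  simp only [mem_range] at he
  simp only [InJRes, true_and]
  omega

theorem card_inJRes_zero_self (hm : 0 < m) : #{e ∈ range (2 * m) | InJRes m 0 m e} = 2 := by
  convert card_pair (show m - 1 ≠ m by omega) using 2
  ext e
  simp only [mem_filter, mem_range, InJRes, mem_insert, mem_singleton, true_and]
  omega

theorem card_inJRes_row {r : ℕ} (hm : 0 < m) (hr0 : r ≠ 0) (hrm : r ≠ m) :
    #{e ∈ range (2 * m) | InJRes m (r / (2 * m)) (r % (2 * m)) e} = 1 := by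
  have hb0 : r / (2 * m) = 0 → r % (2 * m) = r := fun h => by
    simpa [h] using Nat.div_add_mod r (2 * m)
  have ha := Nat.mod_lt r (show 0 < 2 * m by omega)
  generalize r / (2 * m) = b at *
  generalize r % (2 * m) = a at *
  refine card_filter_range_eq_one (x := if b = 0 then (if a < m then a - 1 else a)
    else if b % 2 = 1 then a else if a + 1 = 2 * m then 0 else a + 1) (by split_ifs <;> omega)
    fun e he => ?_
  simp only [InJRes]
  split_ifs <;> omega

theorem card_inJRes_col {e : ℕ} (he : e < 2 * m) :
    #{a ∈ range (2 * m) | InJRes m b a e} = 1 := by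
  refine card_filter_range_eq_one (x := if b = 0 then (if e < m then e + 1 else e)
    else if b % 2 = 1 then e else if e = 0 then 2 * m - 1 else e - 1) (by split_ifs <;> omega)
    fun a ha => ?_
  simp only [InJRes]
  split_ifs <;> omega

def symbolsPerBlock (t b : ℕ) : ℕ :=
  if b = 0 then 1 else if b % 2 = t % 2 then 0 else 2

theorem card_inJRes_symbol {t : ℕ} (ht : t < 2 * m) :
    #{a ∈ range (2 * m) | InJRes m b a ((2 * m - a + t) % (2 * m))} = symbolsPerBlock t b := by
  rw [filter_congr (q := fun a => InJRes m b a (if a ≤ t then t - a else 2 * m - a + t))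
    fun a ha => by rw [sub_add_mod_eq_ite (mem_range.1 ha) ht]]
  unfold symbolsPerBlock
  split_ifs
  · refine card_filter_range_eq_one (x := if t % 2 = 1 then (t + 1) / 2 else t / 2 + m)
      (by split_ifs <;> omega) fun a ha => ?_
    simp only [InJRes]
    split_ifs <;> omega
  · rw [card_eq_zero, filter_eq_empty_iff]
    intro a ha
    rw [mem_range] at ha
    simp only [InJRes]
    split_ifs <;> omega
  -- `2a ≡ t` (odd `b`) or `2a + 1 ≡ t` (even `b`) modulo `2m`, solved by `⌊t/2⌋` and `⌊t/2⌋ + m`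
  · convert card_pair (show t / 2 ≠ t / 2 + m by omega) using 2
    ext a
    simp only [mem_filter, mem_range, mem_insert, mem_singleton]
    simp only [InJRes]
    split_ifs <;> omega

end Blocks

theorem sum_range_symbolsPerBlock (τ t : ℕ) :
    ∑ b ∈ range (2 * τ + 1), symbolsPerBlock t b = 2 * τ + 1 := by
  induction τ with
  | zero => simp [symbolsPerBlock]
  | succ τ ih =>
    rw [show 2 * (τ + 1) + 1 = 2 * τ + 1 + 1 + 1 by ring, sum_range_succ, sum_range_succ, ih]
    unfold symbolsPerBlock
    split_ifs <;> omega

section Counts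

variable {k m n : ℕ}

theorem card_inJ_row (hk : Odd k) (hn : n = 2 * k * m) (i : Fin n) :
    #{p ∈ univ.filter (InJ k m n) | p.1 = i} =
      k * #{e ∈ range (2 * m) | InJRes m (i / (2 * m)) (i % (2 * m)) e} := by
  rw [card_filter_fst_eq, filter_congr fun c _ => inJ_iff hk hn (i, c),
    Fin.card_filter_mod (by rw [hn]; ring) fun e => InJRes m (i / (2 * m)) (i % (2 * m)) e]

theorem card_inJ_col (hk : Odd k) (hm : 0 < m) (hn : n = 2 * k * m) (c : Fin n) :
    #{p ∈ univ.filter (InJ k m n) | p.2 = c} = k := by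
  rw [card_filter_snd_eq_graph _ _ (fun _ => c) fun _ => Iff.rfl,
    filter_congr fun r _ => inJ_iff hk hn (r, c),
    Fin.card_filter_div_mod (by rw [hn]; ring) fun b a => InJRes m b a (c % (2 * m))]
  simp [card_inJRes_col (Nat.mod_lt (c : ℕ) (show 0 < 2 * m by omega))]

theorem card_inJ_symbol (hk : Odd k) (hm : 0 < m) (hn : n = 2 * k * m) (s : Fin n) :
    #{p ∈ univ.filter (InJ k m n) | ((p.1 : ℕ) + p.2) % n = s} = k := by
  have : NeZero n := NeZero.of_pos s.pos
  rw [card_filter_snd_eq_graph _ _ (fun r => s - r) fun p => by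
      rw [← Fin.val_add, ← Fin.ext_iff]; exact eq_sub_iff_add_eq'.symm,
    filter_congr fun r _ => inJ_iff hk hn (r, s - r)]
  simp only [Fin.val_sub_mod_of_dvd (show 2 * m ∣ n from ⟨k, by rw [hn]; ring⟩)]
  rw [Fin.card_filter_div_mod (by rw [hn]; ring)
      fun b a => InJRes m b a ((2 * m - a + s % (2 * m)) % (2 * m)),
    sum_congr rfl fun b _ => card_inJRes_symbol (Nat.mod_lt _ (by omega))]
  obtain ⟨τ, rfl⟩ := hk
  exact sum_range_symbolsPerBlock τ _

end Counts

theorem stmt9 (k m n : ℕ) (hk : Odd k) (hm : 2 ≤ m) (hn : n = 2 * k * m) :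
    (∀ c : Fin n,
      ((Finset.univ.filter (InJ k m n)).filter fun p => p.2 = c).card = k) ∧
    (∀ s : Fin n,
      ((Finset.univ.filter (InJ k m n)).filter
        fun p => ((p.1 : ℕ) + (p.2 : ℕ)) % n = (s : ℕ)).card = k) ∧
    (∀ i : Fin n, (i : ℕ) = 0 →
      ((Finset.univ.filter (InJ k m n)).filter fun p => p.1 = i).card = 0) ∧
    (∀ i : Fin n, (i : ℕ) = m →
      ((Finset.univ.filter (InJ k m n)).filter fun p => p.1 = i).card = 2 * k) ∧
    (∀ i : Fin n, (i : ℕ) ≠ 0 → (i : ℕ) ≠ m →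
      ((Finset.univ.filter (InJ k m n)).filter fun p => p.1 = i).card = k) := by
  refine ⟨card_inJ_col hk (by omega) hn, card_inJ_symbol hk (by omega) hn,
    fun i hi => ?_, fun i hi => ?_, fun i hi0 him => ?_⟩
  · rw [card_inJ_row hk hn, hi, Nat.zero_div, Nat.zero_mod, card_inJRes_zero_zero, mul_zero]
  · rw [card_inJ_row hk hn, hi, Nat.div_eq_of_lt (by omega), Nat.mod_eq_of_lt (by omega),
      card_inJRes_zero_self (by omega), mul_comm]
  · rw [card_inJ_row hk hn, card_inJRes_row (by omega) hi0 him, mul_one]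
end

section
/- Let n = 2km with k odd and m ≥ 2. The set T = {(0, jm, jm mod n), (m, jm, (m+jm) mod n) : 0 ≤ j < 2k} is a latin trade in B_n whose disjoint mate T' is obtained by swapping the two symbols in each column of T; i.e., replacing T by T' in B_n yields a latin square. -/
open scoped Classical

/-- The latin square obtained from `Bₙ` by swapping the two symbols in cells
`(0, jm)` and `(m, jm)` for `0 ≤ j < 2k` (the columns are exactly the multiples of `m`). -/
def swappedSquare (k m n : ℕ) [NeZero n] : Fin n → Fin n → Fin n := fun i j =>
  if ((i : ℕ) = 0 ∨ (i : ℕ) = m) ∧ m ∣ (j : ℕ) then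
    (if (i : ℕ) = 0 then ((Fin.ofNat n m) + j) else j)
  else i + j

/-!
In a column `j` of `swappedSquare k m n` the symbol in row `i` is `σ i + j`, where `σ` is the
transposition `(0 m)` if `m ∣ j` and the identity otherwise, so every column is a permutation.
Row `0` reads `j ↦ m + j` on the multiples of `m` and `j ↦ j` elsewhere, row `m` the other way
round; both are permutations because, as `m ∣ n`, the set of multiples of `m` in `ℤ/n` is
invariant under translation by `m`. All other rows are those of `Bₙ`.
-/

theorem bijective_ite_add_of_add_left_iff {G : Type*} [AddGroup G] [Finite G] {P : G → Prop}
    [DecidablePred P] {a : G} (hP : ∀ j, P (a + j) ↔ P j) :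
    Function.Bijective fun j => (if P j then a else 0) + j := by
  refine Finite.injective_iff_bijective.mp fun j₁ j₂ h => ?_
  by_cases h₁ : P j₁ <;> by_cases h₂ : P j₂ <;>
    simp only [h₁, h₂, if_true, if_false, zero_add] at h
  · exact add_left_cancel h
  · exact absurd (h ▸ (hP j₁).mpr h₁) h₂
  · exact absurd (h ▸ (hP j₂).mpr h₂) h₁
  · exact h

theorem isLatinSquare_swap_add {n : ℕ} [NeZero n] (a : Fin n) (P : Fin n → Prop)
    [DecidablePred P] (hP : ∀ j, P (a + j) ↔ P j) :
    IsLatinSquare fun i j => (if P j then Equiv.swap 0 a i else i) + j := by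
  refine ⟨fun i => ?_, fun j => ?_⟩
  · by_cases hi₀ : i = 0
    · subst hi₀
      simpa only [Equiv.swap_apply_left] using bijective_ite_add_of_add_left_iff hP
    by_cases hia : i = a
    · subst hia
      simpa only [Equiv.swap_apply_right, ite_not] using
        bijective_ite_add_of_add_left_iff (P := fun j => ¬P j) fun j => not_congr (hP j)
    · simp only [Equiv.swap_apply_of_ne_of_ne hi₀ hia, ite_self]
      exact (Equiv.addLeft i).bijective
  · by_cases hj : P j
    · simp only [hj, if_true]
      exact (Equiv.addRight j).bijective.comp (Equiv.swap 0 a).bijective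
    · simp only [hj, if_false]
      exact (Equiv.addRight j).bijective

theorem swappedSquare_eq_swap_add (k : ℕ) {m n : ℕ} [NeZero n] (hmn : m < n) :
    swappedSquare k m n =
      fun (i j : Fin n) => (if m ∣ (j : ℕ) then Equiv.swap 0 (Fin.ofNat n m) i else i) + j := by
  have hval : ∀ i : Fin n, (i : ℕ) = m ↔ i = Fin.ofNat n m := fun i => by
    rw [Fin.ext_iff, Fin.val_ofNat, Nat.mod_eq_of_lt hmn]
  funext i j
  by_cases hj : m ∣ (j : ℕ)
  · by_cases hi₀ : i = 0
    · simp [swappedSquare, hi₀, hj]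
    have hi₀' : (i : ℕ) ≠ 0 := Fin.val_ne_zero_iff.mpr hi₀
    by_cases hia : i = Fin.ofNat n m
    · rw [hia, Equiv.swap_apply_right, if_pos hj, zero_add, ← hia]
      rw [swappedSquare, if_pos ⟨Or.inr ((hval i).mpr hia), hj⟩, if_neg hi₀']
    · simp only [swappedSquare, hi₀', (not_congr (hval i)).mpr hia, hj, or_self, false_and,
        if_true, if_false, Equiv.swap_apply_of_ne_of_ne hi₀ hia]
  · simp [swappedSquare, hj]

theorem dvd_val_ofNat_add_iff {m n : ℕ} [NeZero n] (hmn : m < n) (hmdn : m ∣ n) (j : Fin n) :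
    m ∣ ((Fin.ofNat n m + j : Fin n) : ℕ) ↔ m ∣ (j : ℕ) := by
  rw [Fin.val_add, Fin.val_ofNat, Nat.mod_eq_of_lt hmn, Nat.dvd_mod_iff hmdn,
    Nat.dvd_add_right (dvd_refl m)]

theorem stmt11_general (k m n : ℕ) [NeZero n] (hn : n = 2 * k * m) :
    IsLatinSquare (swappedSquare k m n) := by
  have hkm : k * m ≠ 0 := fun h => NeZero.ne n (by rw [hn, mul_assoc, h, mul_zero])
  have hmn : m < n := by
    have : m ≤ k * m := Nat.le_mul_of_pos_left m (Nat.pos_of_ne_zero (left_ne_zero_of_mul hkm))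
    rw [hn, mul_assoc]
    omega
  have hmdn : m ∣ n := ⟨2 * k, by rw [hn]; ring⟩
  rw [swappedSquare_eq_swap_add k hmn]
  exact isLatinSquare_swap_add _ _ (dvd_val_ofNat_add_iff hmn hmdn)

theorem stmt11 (k m n : ℕ) [NeZero n] (hk : Odd k) (hm : 2 ≤ m)
    (hn : n = 2 * k * m) :
    IsLatinSquare (swappedSquare k m n) :=
  stmt11_general k m n hn
end

section
/- Let n = 2km with k odd, m ≥ 2, and let L' be the latin square obtained from B_n by replacing, for each j with 0 ≤ j < 2k, the symbols in cells (0, jm) and (m, jm) with each other (i.e., L'[0][jm] = m + jm mod n and L'[m][jm] = jm mod n, and L' agrees with B_n elsewhere). Then L' has no k'-plex for any odd k' < k. -/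
open scoped Classical

/-! Read the deviation `Δ(i, j) = L i j - i - j` in `ZMod n`. Over a `k'`-plex the symbols, the
rows and the columns each run `k'` times through `ZMod n`, so `∑ Δ = -k' • ∑ s`, which is `n / 2`
when `n` is even and `k'` is odd (the Delta lemma). In the swapped square `Δ` is `m` on the cells
`(0, jm)`, `-m` on the cells `(m, jm)` and `0` elsewhere, so `∑ Δ = (a - b) m`, where `a, b ≤ k'`
count the plex cells of each kind in rows `0` and `m`. With `n = 2km` this forces
`a - b ≡ k [ZMOD 2k]`, impossible since `|a - b| < k`. -/

open Finset

lemma sum_comp_eq_nsmul_sum_of_card_fiber {ι κ M : Type*} [AddCommMonoid M] [DecidableEq κ]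
    [Fintype κ] {s : Finset ι} {g : ι → κ} {c : ℕ} (hg : ∀ j, #{i ∈ s | g i = j} = c)
    (f : κ → M) : ∑ i ∈ s, f (g i) = c • ∑ j, f j := by
  rw [← sum_fiberwise' s g f, smul_sum]
  simp only [sum_const, hg]

lemma sum_fin_val_cast_of_eq_two_mul {n q : ℕ} (hn : n = 2 * q) :
    ∑ s : Fin n, ((s : ℕ) : ZMod n) = q := by
  have hgauss : (∑ i ∈ range n, i) + q = q * n := by
    have h := sum_range_id_mul_two n
    subst hn
    rcases q with _ | q
    · simp
    · rw [show 2 * (q + 1) - 1 = 2 * q + 1 by omega] at h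
      linarith
  have hzero : ((n : ℕ) : ZMod n) = 0 := ZMod.natCast_self n
  have h2q : ((2 * q : ℕ) : ZMod n) = 0 := hn ▸ hzero
  rw [Fin.sum_univ_eq_sum_range (fun i => (i : ZMod n))]
  have hcast := congrArg ((↑) : ℕ → ZMod n) hgauss
  push_cast at hcast h2q
  linear_combination hcast + (q : ZMod n) * hzero - h2q

/-- The paper's least-absolute-value residue of `L i j - i - j` is a representative in `ℤ` of this
class; the Delta lemma only concerns it mod `n`. -/
def delta {n : ℕ} (L : Fin n → Fin n → Fin n) (p : Fin n × Fin n) : ZMod n :=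
  ((L p.1 p.2 : ℕ) : ZMod n) - (p.1 : ℕ) - (p.2 : ℕ)

namespace IsPlex

variable {n k : ℕ} {L : Fin n → Fin n → Fin n} {K : Finset (Fin n × Fin n)}

lemma sum_delta (hK : IsPlex L k K) :
    ∑ p ∈ K, delta L p = -(k • ∑ s : Fin n, ((s : ℕ) : ZMod n)) := by
  obtain ⟨hrow, hcol, hsym⟩ := hK
  let f : Fin n → ZMod n := fun s => (s : ℕ)
  simp only [delta, sum_sub_distrib]
  rw [sum_comp_eq_nsmul_sum_of_card_fiber hsym f, sum_comp_eq_nsmul_sum_of_card_fiber hrow f,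
    sum_comp_eq_nsmul_sum_of_card_fiber hcol f]
  abel

lemma sum_delta_of_odd {q : ℕ} (hK : IsPlex L k K) (hk : Odd k) (hn : n = 2 * q) :
    ∑ p ∈ K, delta L p = q := by
  obtain ⟨t, rfl⟩ := hk
  have h2q : ((2 * q : ℕ) : ZMod n) = 0 := hn ▸ ZMod.natCast_self n
  push_cast at h2q
  rw [hK.sum_delta, sum_fin_val_cast_of_eq_two_mul hn, nsmul_eq_mul]
  push_cast
  linear_combination (-(t : ZMod n) - 1) * h2q

lemma card_filter_val_fst_le (hK : IsPlex L k K) (r : ℕ) (P : Fin n × Fin n → Prop)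
    [DecidablePred P] : #{p ∈ K | (p.1 : ℕ) = r ∧ P p} ≤ k := by
  by_cases hr : r < n
  · rw [← hK.1 ⟨r, hr⟩]
    exact card_le_card fun p hp => by
      simp only [mem_filter] at hp ⊢
      exact ⟨hp.1, Fin.ext hp.2.1⟩
  · convert Nat.zero_le k
    rw [card_eq_zero, filter_eq_empty_iff]
    omega

end IsPlex

section swappedSquare

variable {k m n : ℕ} [NeZero n]

lemma delta_swappedSquare (hm : m ≠ 0) (p : Fin n × Fin n) :
    delta (swappedSquare k m n) p =
      (if (p.1 : ℕ) = 0 ∧ m ∣ (p.2 : ℕ) then (m : ZMod n) else 0) -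
        (if (p.1 : ℕ) = m ∧ m ∣ (p.2 : ℕ) then (m : ZMod n) else 0) := by
  obtain ⟨i, j⟩ := p
  simp only [delta, swappedSquare]
  by_cases hj : m ∣ (j : ℕ) <;> by_cases hi0 : (i : ℕ) = 0 <;> by_cases him : (i : ℕ) = m <;>
    simp [hj, hi0, him, hm, hm.symm, Fin.val_add]

lemma sum_delta_swappedSquare (hm : m ≠ 0) (K : Finset (Fin n × Fin n)) :
    ∑ p ∈ K, delta (swappedSquare k m n) p =
      ((#{p ∈ K | (p.1 : ℕ) = 0 ∧ m ∣ (p.2 : ℕ)} : ZMod n) -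
        #{p ∈ K | (p.1 : ℕ) = m ∧ m ∣ (p.2 : ℕ)}) * m := by
  simp only [delta_swappedSquare hm, sum_sub_distrib, ← sum_filter, sum_const, nsmul_eq_mul]
  ring

end swappedSquare

lemma sub_mul_ne_mul_of_le_of_lt {a b k k' m : ℕ} (ha : a ≤ k') (hb : b ≤ k') (hk : k' < k)
    (hm : m ≠ 0) : ((a : ZMod (2 * k * m)) - b) * m ≠ (k * m : ℕ) := by
  intro h
  have hcast : ((((a : ℤ) - b - k) * m : ℤ) : ZMod (2 * k * m)) = 0 := by
    push_cast at h ⊢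
    linear_combination h
  rw [ZMod.intCast_zmod_eq_zero_iff_dvd] at hcast
  push_cast at hcast
  have hdvd : (2 * k : ℤ) ∣ (a : ℤ) - b - k :=
    (mul_dvd_mul_iff_right (by exact_mod_cast hm)).mp hcast
  have := Int.eq_zero_of_abs_lt_dvd hdvd (by rw [abs_lt]; omega)
  omega

theorem stmt12_general (k m n : ℕ) [NeZero n] (hn : n = 2 * k * m) :
    ∀ k', Odd k' → k' < k → ¬ ∃ K, IsPlex (swappedSquare k m n) k' K := by
  rintro k' hk' hlt ⟨K, hK⟩
  subst hn
  have hm : m ≠ 0 := by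
    rintro rfl
    exact NeZero.ne (2 * k * 0) (mul_zero _)
  have hΔ := hK.sum_delta_of_odd hk' (q := k * m) (by ring)
  rw [sum_delta_swappedSquare hm] at hΔ
  exact sub_mul_ne_mul_of_le_of_lt (hK.card_filter_val_fst_le 0 _)
    (hK.card_filter_val_fst_le m _) hlt hm hΔ

theorem stmt12 (k m n : ℕ) [NeZero n] (hk : Odd k) (hm : 2 ≤ m)
    (hn : n = 2 * k * m) :
    ∀ k', Odd k' → k' < k → ¬ ∃ K, IsPlex (swappedSquare k m n) k' K :=
  stmt12_general k m n hn
end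

section
/- Let n ≡ 2 (mod 4), n = 4m+2, and define the latin square L_n of order n by: L_n[i][j] ≡ i+j+1 (mod n) if n−1−m ≤ i ≤ n−2 and j ∈ {m, 3m+1}; L_n[i][j] ≡ i+j−1 if n−m ≤ i ≤ n−1 and j ∈ {m+1, 3m+2}; L_n[i][j] ≡ i+j+m if i = n−1−m and j ∈ {0, m+1, 2m+1, 3m+2}; L_n[i][j] ≡ i+j−m if i = n−1 and j ∈ {0, m, 2m+1, 3m+1}; and L_n[i][j] ≡ i+j otherwise. Then L_n has no transversal. -/
open scoped Classical

open Fin.NatCast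

/-- The latin square `Lₙ` of order `n = 4m+2` from the paper. -/
def smallSquare (m n : ℕ) [NeZero n] : Fin n → Fin n → Fin n := fun i j =>
  if (n - 1 - m ≤ (i : ℕ) ∧ (i : ℕ) ≤ n - 2) ∧ ((j : ℕ) = m ∨ (j : ℕ) = 3 * m + 1) then
    i + j + 1
  else if (n - m ≤ (i : ℕ)) ∧ ((j : ℕ) = m + 1 ∨ (j : ℕ) = 3 * m + 2) then
    i + j - 1
  else if ((i : ℕ) = n - 1 - m) ∧
      ((j : ℕ) = 0 ∨ (j : ℕ) = m + 1 ∨ (j : ℕ) = 2 * m + 1 ∨ (j : ℕ) = 3 * m + 2) then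
    i + j + (m : Fin n)
  else if ((i : ℕ) = n - 1) ∧
      ((j : ℕ) = 0 ∨ (j : ℕ) = m ∨ (j : ℕ) = 2 * m + 1 ∨ (j : ℕ) = 3 * m + 1) then
    i + j - (m : Fin n)
  else i + j

/-!
Write the symbol in cell `(i, j)` as `i + j + Δ(i, j)` modulo `n`, where `Δ` is the paper's
`Δ₁`, an integer with `|Δ| ≤ m`. Along a transversal the symbols, rows and columns each run once
through `ℤ/n`, so `∑ Δ ≡ -n(n-1)/2 ≡ n/2 (mod n)` for even `n`. In `Lₙ` the positive offsets
lie in rows `3m+1, …, 4m` (value `1`) and in row `3m+1` (value `m`), and the negative ones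
symmetrically in rows `3m+2, …, 4m+1`; since a transversal meets each row once,
`|∑ Δ| ≤ 2m < 2m+1 = n/2`, which is impossible. The same congruence shows that `Lₙ` is latin:
two equal symbols in a row (column) force a congruence between two integers less than `2n` apart,
leaving a finite case check.
-/

namespace Fin

variable {n : ℕ}

theorem val_add_modEq (a b : Fin n) : ((a + b : Fin n) : ℤ) ≡ a + b [ZMOD n] := by
  rw [Fin.val_add]
  push_cast
  exact Int.mod_modEq _ _

theorem val_sub_modEq (a b : Fin n) : ((a - b : Fin n) : ℤ) ≡ a - b [ZMOD n] := by
  rw [Fin.val_sub, Int.natCast_mod, Nat.cast_add, Nat.cast_sub b.isLt.le]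
  exact (Int.mod_modEq _ _).trans (Int.modEq_iff_dvd.mpr ⟨-1, by ring⟩)

theorem val_natCast_modEq [NeZero n] (k : ℕ) : (((k : Fin n) : ℕ) : ℤ) ≡ k [ZMOD n] := by
  rw [Fin.val_natCast]
  push_cast
  exact Int.mod_modEq _ _

theorem sum_univ_val_modEq_half {k : ℕ} (hn : n = 2 * k) :
    ∑ x : Fin n, (x : ℤ) ≡ k [ZMOD n] := by
  subst hn
  rw [Fin.sum_univ_eq_sum_range (fun i => (i : ℤ)), ← Nat.cast_sum]
  rcases k with _ | k
  · simp
  have hgauss := Finset.sum_range_id_mul_two (2 * (k + 1))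
  rw [show 2 * (k + 1) - 1 = 2 * k + 1 by omega] at hgauss
  have hgauss' : ((∑ i ∈ Finset.range (2 * (k + 1)), i : ℕ) : ℤ) * 2 =
      2 * (k + 1) * (2 * k + 1) := by
    exact_mod_cast hgauss
  exact Int.modEq_iff_dvd.mpr ⟨-k, by push_cast; linarith⟩

end Fin

theorem Int.ModEq.eq_or_eq_add_or_eq_add {n a b : ℤ} (h : a ≡ b [ZMOD n])
    (hab : a < b + 2 * n) (hba : b < a + 2 * n) : a = b ∨ a = b + n ∨ b = a + n := by
  obtain ⟨c, hc⟩ := Int.modEq_iff_dvd.mp h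
  have hn : 0 < n := by linarith
  have hc_lt : c < 2 := lt_of_mul_lt_mul_left (a := n) (by linarith) hn.le
  have hc_gt : -2 < c := lt_of_mul_lt_mul_left (a := n) (by linarith) hn.le
  interval_cases c
  · exact Or.inr (Or.inl (by linarith))
  · exact Or.inl (by linarith)
  · exact Or.inr (Or.inr (by linarith))

theorem Finset.sum_comp_eq_sum_univ_of_card_fiber_eq_one {ι β M : Type*} [Fintype β]
    [DecidableEq β] [AddCommMonoid M] {K : Finset ι} {φ : ι → β}
    (hφ : ∀ b, (K.filter fun a => φ a = b).card = 1) (g : β → M) :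
    ∑ a ∈ K, g (φ a) = ∑ b, g b := by
  rw [← Finset.sum_fiberwise K φ]
  refine Finset.sum_congr rfl fun b _ => ?_
  rw [Finset.sum_congr rfl fun a ha => by rw [(Finset.mem_filter.mp ha).2], Finset.sum_const,
    hφ b, one_smul]

theorem Finset.sum_le_sum_univ_of_card_fiber_eq_one {ι β M : Type*} [Fintype β]
    [DecidableEq β] [AddCommMonoid M] [PartialOrder M] [IsOrderedAddMonoid M]
    {K : Finset ι} {φ : ι → β} (hφ : ∀ b, (K.filter fun a => φ a = b).card = 1)
    {f : ι → M} {g : β → M} (hfg : ∀ a, f a ≤ g (φ a)) :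
    ∑ a ∈ K, f a ≤ ∑ b, g b :=
  (Finset.sum_le_sum fun a _ => hfg a).trans_eq (sum_comp_eq_sum_univ_of_card_fiber_eq_one hφ g)

theorem sum_univ_fin_ite_add_ite_le {n r : ℕ} (hr : r < n) (w : ℤ) (a b : ℕ) :
    ∑ i : Fin n,
        ((if (i : ℕ) = r then w else 0) + if a ≤ (i : ℕ) ∧ (i : ℕ) ≤ b then 1 else 0) ≤
      w + (b + 1 - a : ℕ) := by
  rw [Fin.sum_univ_eq_sum_range (fun i => (if i = r then w else 0) +
    if a ≤ i ∧ i ≤ b then (1 : ℤ) else 0), Finset.sum_add_distrib, Finset.sum_ite_eq',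
    if_pos (Finset.mem_range.mpr hr), Finset.sum_boole, ← Nat.card_Icc]
  gcongr
  exact fun i hi => Finset.mem_Icc.mpr (Finset.mem_filter.mp hi).2

theorem IsPlex.sum_modEq_half {n k : ℕ} (hn : n = 2 * k) {L : Fin n → Fin n → Fin n}
    {K : Finset (Fin n × Fin n)} (hK : IsPlex L 1 K) (Δ : Fin n → Fin n → ℤ)
    (hΔ : ∀ i j, (L i j : ℤ) ≡ i + j + Δ i j [ZMOD n]) :
    ∑ p ∈ K, Δ p.1 p.2 ≡ k [ZMOD n] := by
  obtain ⟨hrow, hcol, hsym⟩ := hK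
  set T := ∑ x : Fin n, (x : ℤ)
  have hL : ∑ p ∈ K, (L p.1 p.2 : ℤ) = T :=
    Finset.sum_comp_eq_sum_univ_of_card_fiber_eq_one hsym fun x => (x : ℤ)
  have hi : ∑ p ∈ K, (p.1 : ℤ) = T :=
    Finset.sum_comp_eq_sum_univ_of_card_fiber_eq_one hrow fun x => (x : ℤ)
  have hj : ∑ p ∈ K, (p.2 : ℤ) = T :=
    Finset.sum_comp_eq_sum_univ_of_card_fiber_eq_one hcol fun x => (x : ℤ)
  have hΔ' : ∀ p ∈ K, Δ p.1 p.2 ≡ (L p.1 p.2 : ℤ) - p.1 - p.2 [ZMOD n] := fun p _ =>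
    Int.ModEq.add_left_cancel' ((p.1 : ℤ) + p.2) (by convert (hΔ p.1 p.2).symm using 1; ring)
  have hT : -T ≡ k [ZMOD n] := (Fin.sum_univ_val_modEq_half hn).neg.trans
    (Int.modEq_iff_dvd.mpr ⟨1, by rw [hn]; push_cast; ring⟩)
  calc ∑ p ∈ K, Δ p.1 p.2
      ≡ ∑ p ∈ K, ((L p.1 p.2 : ℤ) - p.1 - p.2) [ZMOD n] := Int.ModEq.sum hΔ'
    _ = -T := by rw [Finset.sum_sub_distrib, Finset.sum_sub_distrib, hL, hi, hj]; ring
    _ ≡ k [ZMOD n] := hT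

/-- The paper's `Δ₁` for `Lₙ`, read off case by case from `smallSquare`. -/
def smallSquareDelta (m n : ℕ) (i j : Fin n) : ℤ :=
  if (n - 1 - m ≤ (i : ℕ) ∧ (i : ℕ) ≤ n - 2) ∧ ((j : ℕ) = m ∨ (j : ℕ) = 3 * m + 1) then
    1
  else if (n - m ≤ (i : ℕ)) ∧ ((j : ℕ) = m + 1 ∨ (j : ℕ) = 3 * m + 2) then
    -1
  else if ((i : ℕ) = n - 1 - m) ∧
      ((j : ℕ) = 0 ∨ (j : ℕ) = m + 1 ∨ (j : ℕ) = 2 * m + 1 ∨ (j : ℕ) = 3 * m + 2) then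
    m
  else if ((i : ℕ) = n - 1) ∧
      ((j : ℕ) = 0 ∨ (j : ℕ) = m ∨ (j : ℕ) = 2 * m + 1 ∨ (j : ℕ) = 3 * m + 1) then
    -m
  else 0

section smallSquare

variable {m n : ℕ}

theorem smallSquare_modEq [NeZero n] (i j : Fin n) :
    (smallSquare m n i j : ℤ) ≡ i + j + smallSquareDelta m n i j [ZMOD n] := by
  have hadd (k : ℕ) : ((i + j + (k : Fin n) : Fin n) : ℤ) ≡ i + j + k [ZMOD n] :=
    (Fin.val_add_modEq _ _).trans ((Fin.val_add_modEq i j).add (Fin.val_natCast_modEq k))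
  have hsub (k : ℕ) : ((i + j - (k : Fin n) : Fin n) : ℤ) ≡ i + j - k [ZMOD n] :=
    (Fin.val_sub_modEq _ _).trans ((Fin.val_add_modEq i j).sub (Fin.val_natCast_modEq k))
  unfold smallSquare smallSquareDelta
  split_ifs
  · simpa using hadd 1
  · simpa [sub_eq_add_neg] using hsub 1
  · exact hadd m
  · simpa [sub_eq_add_neg] using hsub m
  · simpa using Fin.val_add_modEq i j

theorem abs_smallSquareDelta_le (hn : n = 4 * m + 2) (i j : Fin n) :
    |smallSquareDelta m n i j| ≤ m := by
  unfold smallSquareDelta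
  split_ifs <;> simp <;> omega

theorem smallSquareDelta_le (hn : n = 4 * m + 2) (i j : Fin n) :
    smallSquareDelta m n i j ≤
      (if (i : ℕ) = 3 * m + 1 then (m : ℤ) else 0) +
        if 3 * m + 1 ≤ (i : ℕ) ∧ (i : ℕ) ≤ 4 * m then 1 else 0 := by
  unfold smallSquareDelta
  split_ifs <;> omega

theorem neg_smallSquareDelta_le (hn : n = 4 * m + 2) (i j : Fin n) :
    -smallSquareDelta m n i j ≤
      (if (i : ℕ) = 4 * m + 1 then (m : ℤ) else 0) +
        if 3 * m + 2 ≤ (i : ℕ) ∧ (i : ℕ) ≤ 4 * m + 1 then 1 else 0 := by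
  unfold smallSquareDelta
  split_ifs <;> omega

theorem abs_sum_smallSquareDelta_le (hn : n = 4 * m + 2) {K : Finset (Fin n × Fin n)}
    (hrow : ∀ i, (K.filter fun p => p.1 = i).card = 1) :
    |∑ p ∈ K, smallSquareDelta m n p.1 p.2| ≤ 2 * m := by
  have hupper := (Finset.sum_le_sum_univ_of_card_fiber_eq_one hrow
    fun p => smallSquareDelta_le hn p.1 p.2).trans
      (sum_univ_fin_ite_add_ite_le (show 3 * m + 1 < n by omega) m (3 * m + 1) (4 * m))
  have hlower := (Finset.sum_le_sum_univ_of_card_fiber_eq_one hrow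
    fun p => neg_smallSquareDelta_le hn p.1 p.2).trans
      (sum_univ_fin_ite_add_ite_le (show 4 * m + 1 < n by omega) m (3 * m + 2) (4 * m + 1))
  rw [Finset.sum_neg_distrib] at hlower
  rw [abs_le]
  constructor <;> omega

theorem smallSquare_row_injective [NeZero n] (hn : n = 4 * m + 2) (i : Fin n) :
    Function.Injective (smallSquare m n i) := by
  intro a b hab
  have h := (smallSquare_modEq i a).symm.trans (hab ▸ smallSquare_modEq i b)
  rw [add_assoc, add_assoc] at h
  have ha := abs_le.mp (abs_smallSquareDelta_le hn i a)
  have hb := abs_le.mp (abs_smallSquareDelta_le hn i b)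
  have h3 := (Int.ModEq.add_left_cancel' _ h).eq_or_eq_add_or_eq_add (by omega) (by omega)
  clear h ha hb hab
  ext
  subst hn
  simp only [smallSquareDelta, show 4 * m + 2 - 2 = 4 * m by omega,
    show 4 * m + 2 - m = 3 * m + 2 by omega, show 4 * m + 2 - 1 = 4 * m + 1 by omega] at h3
  split_ifs at h3 <;> omega

theorem smallSquare_col_injective [NeZero n] (hn : n = 4 * m + 2) (j : Fin n) :
    Function.Injective fun i => smallSquare m n i j := by
  intro a b (hab : smallSquare m n a j = smallSquare m n b j)
  have h := (smallSquare_modEq a j).symm.trans (hab ▸ smallSquare_modEq b j)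
  rw [add_right_comm, add_right_comm (b : ℤ)] at h
  have ha := abs_le.mp (abs_smallSquareDelta_le hn a j)
  have hb := abs_le.mp (abs_smallSquareDelta_le hn b j)
  have h3 := (Int.ModEq.add_right_cancel' _ h).eq_or_eq_add_or_eq_add (by omega) (by omega)
  clear h ha hb hab
  ext
  subst hn
  simp only [smallSquareDelta, show 4 * m + 2 - 2 = 4 * m by omega,
    show 4 * m + 2 - m = 3 * m + 2 by omega, show 4 * m + 2 - 1 = 4 * m + 1 by omega] at h3
  split_ifs at h3 <;> omega

end smallSquare

theorem stmt14 (m n : ℕ) [NeZero n] (hn : n = 4 * m + 2) :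
    IsLatinSquare (smallSquare m n) ∧ ¬ HasTransversal (smallSquare m n) := by
  refine ⟨⟨fun i => (smallSquare_row_injective hn i).bijective_of_finite,
    fun j => (smallSquare_col_injective hn j).bijective_of_finite⟩, ?_⟩
  rintro ⟨K, hK⟩
  have hsum := hK.sum_modEq_half (k := 2 * m + 1) (by omega) _ smallSquare_modEq
  have hbound := abs_le.mp (abs_sum_smallSquareDelta_le hn hK.1)
  rcases hsum.eq_or_eq_add_or_eq_add (by omega) (by omega) with h | h | h <;> omega
end

section
/- Let n be divisible by 4 with n ≥ 8, and define J = J_0 ∪ J_1 ∪ J_2 ∪ J_3 ∪ J_4 ⊆ B_n where (with (x;y) denoting the triple (x, y mod n, (x+y) mod n)): J_0 = {(0;0),(0;1),(0;2),(0;3),(0;4)}, J_1 = {(i;3i+2),(i;3i+3),(i;3i+4) : 1 ≤ i ≤ n/4−1}, J_2 = {(n/4; 3n/4+2)}, J_3 = {(i;3i),(i;3i+1),(i;3i+2) : n/4+1 ≤ i ≤ n/2−1}, J_4 = {(i;i−n/2+1),(i;i),(i;i+1) : n/2 ≤ i ≤ n−1}. Then every column of B_n contains exactly 3 elements of J, every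 symbol appears in exactly 3 elements of J, and every row contains exactly 3 elements of J except row 0 which contains 5 and row n/4 which contains 1. -/
open scoped Classical

/-- The set `J = J₀ ∪ J₁ ∪ J₂ ∪ J₃ ∪ J₄` of cells of `Bₙ`, for `4 ∣ n`. -/
def InJ4 (n : ℕ) (p : Fin n × Fin n) : Prop :=
  ((p.1 : ℕ) = 0 ∧ (p.2 : ℕ) ≤ 4) ∨
  (∃ i, 1 ≤ i ∧ i ≤ n / 4 - 1 ∧ (p.1 : ℕ) = i ∧
    ((p.2 : ℕ) = (3 * i + 2) % n ∨ (p.2 : ℕ) = (3 * i + 3) % n ∨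
      (p.2 : ℕ) = (3 * i + 4) % n)) ∨
  ((p.1 : ℕ) = n / 4 ∧ (p.2 : ℕ) = (3 * (n / 4) + 2) % n) ∨
  (∃ i, n / 4 + 1 ≤ i ∧ i ≤ n / 2 - 1 ∧ (p.1 : ℕ) = i ∧
    ((p.2 : ℕ) = (3 * i) % n ∨ (p.2 : ℕ) = (3 * i + 1) % n ∨
      (p.2 : ℕ) = (3 * i + 2) % n)) ∨
  (∃ i, n / 2 ≤ i ∧ i ≤ n - 1 ∧ (p.1 : ℕ) = i ∧
    ((p.2 : ℕ) = i - n / 2 + 1 ∨ (p.2 : ℕ) = i ∨ (p.2 : ℕ) = (i + 1) % n))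

/-!
Write `n = 4m`. In natural-number coordinates `(a, b)` membership in `J` becomes a linear
condition `JCell m a b`, a column that wraps around modulo `n` being recorded as `b + 4m`.
A line of `Bₙ` (column, symbol or row) is identified with the set of rows, resp. columns, of its
cells, and on each line the cells of `J` are given by explicit piecewise-linear formulas in the
line index; checking that these are all the cells and that they are distinct is linear arithmetic.
-/

def JCell (m a b : ℕ) : Prop :=
  (a = 0 ∧ b ≤ 4) ∨
  (1 ≤ a ∧ a ≤ m - 1 ∧ 3 * a + 2 ≤ b ∧ b ≤ 3 * a + 4) ∨
  (a = m ∧ (b = 3 * m + 2 ∨ b + 4 * m = 3 * m + 2)) ∨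
  (m + 1 ≤ a ∧ a ≤ 2 * m - 1 ∧
    (3 * a ≤ b ∧ b ≤ 3 * a + 2 ∨ 3 * a ≤ b + 4 * m ∧ b + 4 * m ≤ 3 * a + 2)) ∨
  (2 * m ≤ a ∧ a ≤ 4 * m - 1 ∧ (b = a - 2 * m + 1 ∨ b = a ∨ b = a + 1 ∨ b + 4 * m = a + 1))

theorem eq_mod_iff_of_lt_two_mul {n b x : ℕ} (hb : b < n) (hx : x < 2 * n) :
    b = x % n ↔ b = x ∨ b + n = x := by
  rcases Nat.lt_or_ge x n with h | h
  · rw [Nat.mod_eq_of_lt h]; omega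
  · rw [Nat.mod_eq_sub_mod h, Nat.mod_eq_of_lt (by omega)]; omega

theorem inJ4_iff_jCell {m : ℕ} (p : Fin (4 * m) × Fin (4 * m)) :
    InJ4 (4 * m) p ↔ JCell m p.1 p.2 := by
  obtain ⟨⟨a, ha⟩, ⟨b, hb⟩⟩ := p
  have hmod {x : ℕ} (hx : x < 2 * (4 * m)) := eq_mod_iff_of_lt_two_mul hb hx
  simp only [InJ4, JCell, existsAndEq, true_and, show 4 * m / 4 = m by omega,
    show 4 * m / 2 = 2 * m by omega]
  refine or_congr Iff.rfl (or_congr ?_ (or_congr ?_ (or_congr ?_ ?_)))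
  · refine and_congr_right fun _ => and_congr_right fun _ => ?_
    rw [hmod (by omega), hmod (by omega), hmod (by omega)]; omega
  · exact and_congr_right fun _ => hmod (by omega)
  · refine and_congr_right fun _ => and_congr_right fun _ => ?_
    rw [hmod (by omega), hmod (by omega), hmod (by omega)]; omega
  · refine and_congr_right fun _ => and_congr_right fun _ => ?_
    rw [hmod (x := a + 1) (by omega)]

def symbolCol (n s a : ℕ) : ℕ := if a ≤ s then s - a else s + n - a

theorem add_mod_eq_iff_eq_symbolCol {n s a b : ℕ} (hs : s < n) (ha : a < n) (hb : b < n) :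
    (a + b) % n = s ↔ b = symbolCol n s a := by
  rw [eq_comm, eq_mod_iff_of_lt_two_mul hs (by omega), symbolCol]
  split_ifs <;> omega

section Lines

variable {n : ℕ} (P : ℕ → ℕ → Prop)

theorem card_filter_fst_eq_s15 (i : Fin n) :
    ((Finset.univ.filter fun p : Fin n × Fin n => P p.1 p.2).filter fun p => p.1 = i).card =
      ((Finset.range n).filter (P i)).card := by
  refine Finset.card_bij (fun p _ => (p.2 : ℕ)) ?_ ?_ ?_
  · rintro ⟨a, b⟩ h
    simp only [Finset.mem_filter, Finset.mem_univ, true_and] at h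
    obtain ⟨hP, rfl⟩ := h
    simpa using hP
  · rintro ⟨a, b⟩ h ⟨a', b'⟩ h' (e : (b : ℕ) = b')
    simp only [Finset.mem_filter, Finset.mem_univ, true_and] at h h'
    exact Prod.ext (h.2.trans h'.2.symm) (Fin.ext e)
  · intro b hb
    simp only [Finset.mem_filter, Finset.mem_range] at hb
    exact ⟨(i, ⟨b, hb.1⟩), by simpa using hb.2, rfl⟩

theorem card_filter_snd_eq (j : Fin n) :
    ((Finset.univ.filter fun p : Fin n × Fin n => P p.1 p.2).filter fun p => p.2 = j).card =
      ((Finset.range n).filter (P · j)).card := by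
  refine Finset.card_bij (fun p _ => (p.1 : ℕ)) ?_ ?_ ?_
  · rintro ⟨a, b⟩ h
    simp only [Finset.mem_filter, Finset.mem_univ, true_and] at h
    obtain ⟨hP, rfl⟩ := h
    simpa using hP
  · rintro ⟨a, b⟩ h ⟨a', b'⟩ h' (e : (a : ℕ) = a')
    simp only [Finset.mem_filter, Finset.mem_univ, true_and] at h h'
    exact Prod.ext (Fin.ext e) (h.2.trans h'.2.symm)
  · intro a ha
    simp only [Finset.mem_filter, Finset.mem_range] at ha
    exact ⟨(⟨a, ha.1⟩, j), by simpa using ha.2, rfl⟩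

theorem card_filter_symbol_eq (s : Fin n) :
    ((Finset.univ.filter fun p : Fin n × Fin n => P p.1 p.2).filter
        fun p => ((p.1 : ℕ) + (p.2 : ℕ)) % n = (s : ℕ)).card =
      ((Finset.range n).filter fun a => P a (symbolCol n s a)).card := by
  refine Finset.card_bij (fun p _ => (p.1 : ℕ)) ?_ ?_ ?_
  · rintro ⟨a, b⟩ h
    simp only [Finset.mem_filter, Finset.mem_univ, true_and,
      add_mod_eq_iff_eq_symbolCol s.isLt a.isLt b.isLt] at h
    obtain ⟨hP, hb⟩ := h
    simpa [← hb] using hP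
  · rintro ⟨a, b⟩ h ⟨a', b'⟩ h' (e : (a : ℕ) = a')
    simp only [Finset.mem_filter, Finset.mem_univ, true_and,
      add_mod_eq_iff_eq_symbolCol s.isLt a.isLt b.isLt,
      add_mod_eq_iff_eq_symbolCol s.isLt a'.isLt b'.isLt] at h h'
    exact Prod.ext (Fin.ext e) (Fin.ext (by rw [h.2, h'.2, e]))
  · intro a ha
    simp only [Finset.mem_filter, Finset.mem_range] at ha
    have hb : symbolCol n s a < n := by unfold symbolCol; split_ifs <;> omega
    refine ⟨(⟨a, ha.1⟩, ⟨symbolCol n s a, hb⟩), ?_, rfl⟩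
    simpa [add_mod_eq_iff_eq_symbolCol s.isLt ha.1 hb] using ha.2

end Lines

theorem card_filter_range_eq_three {n x y z : ℕ} {P : ℕ → Prop} (hxy : x ≠ y) (hxz : x ≠ z)
    (hyz : y ≠ z) (h : ∀ a, a < n ∧ P a ↔ a = x ∨ a = y ∨ a = z) :
    ((Finset.range n).filter P).card = 3 :=
  Finset.card_eq_three.2 ⟨x, y, z, hxy, hxz, hyz, by ext a; simp [h]⟩

def colRow₁ (m c : ℕ) : ℕ :=
  if c ≤ 4 then 0 else if c ≤ 3 * m + 2 then (c - 2) / 3 else c / 3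

def colRow₂ (m c : ℕ) : ℕ :=
  if c < 2 * m then (c + 4 * m) / 3 else if c = 2 * m then 4 * m - 1 else c

def colRow₃ (m c : ℕ) : ℕ :=
  if c = 0 then 4 * m - 1 else if c < 2 * m then c + 2 * m - 1
  else if c = 2 * m then 2 * m else c - 1

theorem card_jCell_col {m c : ℕ} (hm : 2 ≤ m) (hc : c < 4 * m) :
    ((Finset.range (4 * m)).filter (JCell m · c)).card = 3 := by
  refine card_filter_range_eq_three (x := colRow₁ m c) (y := colRow₂ m c) (z := colRow₃ m c)
    ?_ ?_ ?_ fun a => ?_ <;>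
  simp only [colRow₁, colRow₂, colRow₃, JCell] <;> split_ifs <;> omega

def symRow₁ (m s : ℕ) : ℕ :=
  if s ≤ 4 then 0 else if s % 4 = 1 then m + s / 4 else (s - 2) / 4

-- the row `i ≥ 2m` whose cell `(i, i)` or `(i, i + 1)` carries `s`
def symRow₂ (m s : ℕ) : ℕ := 2 * m + s / 2

def symRow₃ (m s : ℕ) : ℕ :=
  if s = 0 then m - 1 else if s % 2 = 0 then m + s / 4
  else if s / 2 < m then 3 * m + s / 2 else m + s / 2

theorem card_jCell_symbol {m s : ℕ} (hm : 2 ≤ m) (hs : s < 4 * m) :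
    ((Finset.range (4 * m)).filter fun a => JCell m a (symbolCol (4 * m) s a)).card = 3 := by
  refine card_filter_range_eq_three (x := symRow₁ m s) (y := symRow₂ m s) (z := symRow₃ m s)
    ?_ ?_ ?_ fun a => ?_ <;>
  simp only [symRow₁, symRow₂, symRow₃, JCell, symbolCol] <;> split_ifs <;> omega

def rowCol₁ (m i : ℕ) : ℕ :=
  if i < m then 3 * i + 2
  else if i < 2 * m then (if 3 * i < 4 * m then 3 * i else 3 * i - 4 * m)
  else i + 1 - 2 * m

def rowCol₂ (m i : ℕ) : ℕ :=
  if i < m then 3 * i + 3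
  else if i < 2 * m then (if 3 * i + 1 < 4 * m then 3 * i + 1 else 3 * i + 1 - 4 * m)
  else i

def rowCol₃ (m i : ℕ) : ℕ :=
  if i < m then 3 * i + 4
  else if i < 2 * m then (if 3 * i + 2 < 4 * m then 3 * i + 2 else 3 * i + 2 - 4 * m)
  else if i + 1 < 4 * m then i + 1 else 0

theorem card_jCell_row {m i : ℕ} (hi : i < 4 * m) (hi₀ : i ≠ 0) (him : i ≠ m) :
    ((Finset.range (4 * m)).filter (JCell m i)).card = 3 := by
  refine card_filter_range_eq_three (x := rowCol₁ m i) (y := rowCol₂ m i) (z := rowCol₃ m i)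
    ?_ ?_ ?_ fun b => ?_ <;>
  simp only [rowCol₁, rowCol₂, rowCol₃, JCell] <;> split_ifs <;> omega

theorem card_jCell_row_zero {m : ℕ} (hm : 2 ≤ m) :
    ((Finset.range (4 * m)).filter (JCell m 0)).card = 5 := by
  rw [← Finset.card_range 5]
  congr 1
  ext b
  simp only [Finset.mem_filter, Finset.mem_range, JCell, true_and]
  omega

theorem card_jCell_row_self {m : ℕ} (hm : 2 ≤ m) :
    ((Finset.range (4 * m)).filter (JCell m m)).card = 1 := by
  refine Finset.card_eq_one.2 ⟨if m = 2 then 0 else 3 * m + 2, ?_⟩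
  ext b
  simp only [Finset.mem_filter, Finset.mem_range, Finset.mem_singleton, JCell, true_and]
  split_ifs <;> omega

theorem stmt15 (n : ℕ) (h4 : 4 ∣ n) (h8 : 8 ≤ n) :
    (∀ c : Fin n,
      ((Finset.univ.filter (InJ4 n)).filter fun p => p.2 = c).card = 3) ∧
    (∀ s : Fin n,
      ((Finset.univ.filter (InJ4 n)).filter
        fun p => ((p.1 : ℕ) + (p.2 : ℕ)) % n = (s : ℕ)).card = 3) ∧
    (∀ i : Fin n, (i : ℕ) = 0 →
      ((Finset.univ.filter (InJ4 n)).filter fun p => p.1 = i).card = 5) ∧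
    (∀ i : Fin n, (i : ℕ) = n / 4 →
      ((Finset.univ.filter (InJ4 n)).filter fun p => p.1 = i).card = 1) ∧
    (∀ i : Fin n, (i : ℕ) ≠ 0 → (i : ℕ) ≠ n / 4 →
      ((Finset.univ.filter (InJ4 n)).filter fun p => p.1 = i).card = 3) := by
  obtain ⟨m, rfl⟩ := h4
  have hm : 2 ≤ m := by omega
  have hJ : Finset.univ.filter (InJ4 (4 * m)) = Finset.univ.filter fun p => JCell m p.1 p.2 :=
    Finset.filter_congr fun p _ => inJ4_iff_jCell p
  simp only [hJ, card_filter_fst_eq_s15, card_filter_snd_eq, card_filter_symbol_eq,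
    show 4 * m / 4 = m by omega]
  refine ⟨fun c => card_jCell_col hm c.isLt, fun s => card_jCell_symbol hm s.isLt,
    fun i hi => ?_, fun i hi => ?_, fun i hi₀ him => card_jCell_row i.isLt hi₀ him⟩
  · rw [hi]; exact card_jCell_row_zero hm
  · rw [hi]; exact card_jCell_row_self hm
end

section
/- Let n be divisible by 4, n ≥ 8, and for i ∈ {0,1} let T_i be the set of 8 entries of B_n in rows 0 and n/4 whose column index is congruent to i modulo n/4, and T_i' the set obtained by swapping the two symbols in each column of T_i. Then for each of L_1 = (B_n∖T_0)∪T_0', L_2 = (B_n∖T_1)∪T_1', L_3 = (B_n∖(T_0∪T_1))∪T_0'∪T_1', the array is a latin square of order n with no transversal. -/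
open scoped Classical

/-- The square obtained from `Bₙ` by swapping, in every column whose index is
congruent to an element of `S` modulo `n/4`, the symbols in rows `0` and `n/4`. -/
def tradeSquare (n : ℕ) [NeZero n] (S : Set ℕ) [DecidablePred (· ∈ S)] :
    Fin n → Fin n → Fin n := fun r c =>
  if ((r : ℕ) = 0 ∨ (r : ℕ) = n / 4) ∧ (c : ℕ) % (n / 4) ∈ S then
    (if (r : ℕ) = 0 then (Fin.ofNat n (n / 4 : ℕ)) + c else c)
  else r + c

/-!
With `w = n/4`, the traded square is `L r c = τ_c r + c`, where `τ_c` is the transposition of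
`0` and `w` when the column `c` is traded and the identity otherwise. Being traded only depends
on `c mod w`, so it is invariant under adding multiples of `w`; this makes every row a
permutation, and every column is one by construction.

If `K` were a transversal, its rows, columns and symbols would each run once through `ℤ/n`,
so `∑_{(r,c) ∈ K} (L r c - r - c) = -∑_{x ∈ ℤ/n} x = n/2 = 2w`. But only the cells of `K` in
rows `0` and `w` contribute, with `w` or `0` and `-w` or `0` respectively, and
`2w ∉ {0, w, -w}`.
-/

theorem Finset.sum_comp_eq_sum_univ_of_card_filter_eq_one {α β M : Type*} [Fintype β]
    [DecidableEq β] [AddCommMonoid M] (K : Finset α) (e : α → β) (f : β → M)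
    (he : ∀ b, (K.filter fun a => e a = b).card = 1) :
    ∑ a ∈ K, f (e a) = ∑ b, f b := by
  rw [← Finset.sum_fiberwise K e]
  refine Finset.sum_congr rfl fun b _ => ?_
  rw [Finset.sum_congr rfl fun a ha => by rw [(Finset.mem_filter.mp ha).2], Finset.sum_const,
    he b, one_smul]

theorem Finset.exists_sum_eq_add_of_card_filter_fst_eq_one {α β M : Type*} [Fintype α]
    [DecidableEq α] [AddCommMonoid M] {K : Finset (α × β)}
    (hK : ∀ i, (K.filter fun p => p.1 = i).card = 1) {a b : α} (hab : a ≠ b)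
    (g : α × β → M) (hg : ∀ p ∈ K, p.1 ≠ a → p.1 ≠ b → g p = 0) :
    ∃ pa ∈ K, pa.1 = a ∧ ∃ pb ∈ K, pb.1 = b ∧ ∑ p ∈ K, g p = g pa + g pb := by
  have hrow : ∀ i, ∃ p ∈ K, p.1 = i ∧ ∑ q ∈ K with q.1 = i, g q = g p := fun i => by
    obtain ⟨p, hp⟩ := Finset.card_eq_one.mp (hK i)
    have hpK := Finset.mem_filter.mp (hp ▸ Finset.mem_singleton_self p)
    exact ⟨p, hpK.1, hpK.2, by rw [hp, Finset.sum_singleton]⟩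
  obtain ⟨pa, hpa, rfl, hsa⟩ := hrow a
  obtain ⟨pb, hpb, rfl, hsb⟩ := hrow b
  refine ⟨pa, hpa, rfl, pb, hpb, rfl, ?_⟩
  rw [← Finset.sum_fiberwise K Prod.fst, Fintype.sum_eq_add _ _ hab, hsa, hsb]
  rintro i ⟨hia, hib⟩
  exact Finset.sum_eq_zero fun p hp => by
    obtain ⟨hpK, rfl⟩ := Finset.mem_filter.mp hp
    exact hg p hpK hia hib

theorem IsPlex.sum_sub_sub_eq_neg_sum_univ {n : ℕ} [NeZero n] {L : Fin n → Fin n → Fin n}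
    {K : Finset (Fin n × Fin n)} (hK : IsPlex L 1 K) :
    ∑ p ∈ K, (L p.1 p.2 - p.1 - p.2) = -∑ x : Fin n, x := by
  obtain ⟨hrow, hcol, hsym⟩ := hK
  have hsum : ∀ e : Fin n × Fin n → Fin n, (∀ s, (K.filter fun p => e p = s).card = 1) →
      ∑ p ∈ K, e p = ∑ x : Fin n, x := fun e he =>
    Finset.sum_comp_eq_sum_univ_of_card_filter_eq_one K e id he
  rw [Finset.sum_sub_distrib, Finset.sum_sub_distrib, hsum _ hsym, hsum _ hrow, hsum _ hcol]
  abel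

open Fin.CommRing in
theorem Fin.sum_univ_eq_half {n : ℕ} [NeZero n] (hn : Even n) :
    ∑ x : Fin n, x = Fin.ofNat n (n / 2) := by
  obtain ⟨m, rfl⟩ := hn
  have hgauss : (∑ i ∈ Finset.range (m + m), i) + m = (m + m) * m := by
    have := Finset.sum_range_id_mul_two (m + m)
    rcases m with _ | k
    · simp
    · rw [show k + 1 + (k + 1) - 1 = 2 * k + 1 by omega] at this; nlinarith
  have hm : (m : Fin (m + m)) + m = 0 := by rw [← Nat.cast_add, Fin.natCast_self]
  calc ∑ x : Fin (m + m), x = ((∑ i ∈ Finset.range (m + m), i : ℕ) : Fin (m + m)) := by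
        rw [Nat.cast_sum, ← Fin.sum_univ_eq_sum_range]; simp
    _ = -(m : Fin (m + m)) := by
        rw [eq_neg_iff_add_eq_zero, ← Nat.cast_add, hgauss, Nat.cast_mul, Fin.natCast_self,
          zero_mul]
    _ = Fin.ofNat (m + m) ((m + m) / 2) := by
        rw [Fin.ofNat_eq_cast, show (m + m) / 2 = m by omega, neg_eq_iff_add_eq_zero, hm]

theorem Function.injective_ite_add {G : Type*} [AddCommGroup G] {P : G → Prop}
    [DecidablePred P] {a b : G} (hP : ∀ c, P (c + (a - b)) ↔ P c) :
    Function.Injective fun c => (if P c then a else b) + c := by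
  intro c₁ c₂ h
  have shift : ∀ x y, a + x = b + y → y = x + (a - b) := fun x y h => by
    rw [add_sub, add_comm x a, h, add_sub_cancel_left]
  dsimp only at h
  split_ifs at h with h₁ h₂ h₂
  · exact add_left_cancel h
  · exact absurd ((shift _ _ h ▸ hP c₁).mpr h₁) h₂
  · exact absurd ((shift _ _ h.symm ▸ hP c₂).mpr h₂) h₁
  · exact add_left_cancel h

theorem Fin.val_add_mod_of_dvd {n q : ℕ} (hq : q ∣ n) (c d : Fin n) (hd : q ∣ (d : ℕ)) :
    ((c + d : Fin n) : ℕ) % q = (c : ℕ) % q := by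
  rw [Fin.val_add, Nat.mod_mod_of_dvd _ hq, Nat.add_mod, Nat.mod_eq_zero_of_dvd hd, add_zero,
    Nat.mod_mod]

open Fin.CommRing in
theorem Fin.nsmul_ofNat {n : ℕ} [NeZero n] (k a : ℕ) :
    k • Fin.ofNat n a = Fin.ofNat n (k * a) := by
  rw [Fin.ofNat_eq_cast, Fin.ofNat_eq_cast, nsmul_eq_mul, Nat.cast_mul]

theorem Fin.ofNat_ne_zero {n a : ℕ} [NeZero n] (hpos : 0 < a) (hlt : a < n) :
    Fin.ofNat n a ≠ 0 := by
  rw [Ne, Fin.ext_iff, Fin.val_ofNat, Nat.mod_eq_of_lt hlt, Fin.val_zero]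
  exact hpos.ne'

theorem Fin.dvd_val_swap_sub {n q : ℕ} [NeZero n] (hq : q ∣ n) (r : Fin n) :
    q ∣ ((Equiv.swap 0 (Fin.ofNat n q) r - r : Fin n) : ℕ) := by
  have hw : q ∣ (Fin.ofNat n q : ℕ) := (Nat.dvd_mod_iff hq).2 dvd_rfl
  rcases eq_or_ne r 0 with rfl | h0
  · simpa using hw
  rcases eq_or_ne r (Fin.ofNat n q) with rfl | hrw
  · rw [Equiv.swap_apply_right, zero_sub, Fin.val_neg]
    split_ifs
    exacts [dvd_zero q, Nat.dvd_sub hq hw]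
  · rw [Equiv.swap_apply_of_ne_of_ne h0 hrw, sub_self, Fin.val_zero]
    exact dvd_zero q

section tradeSquare
variable {n : ℕ} [NeZero n] (S : Set ℕ) [DecidablePred (· ∈ S)]

theorem tradeSquare_eq_swap_add (r c : Fin n) :
    tradeSquare n S r c =
      (if (c : ℕ) % (n / 4) ∈ S then Equiv.swap 0 (Fin.ofNat n (n / 4)) r else r) + c := by
  set w := Fin.ofNat n (n / 4)
  have hw : (w : ℕ) = n / 4 :=
    Nat.mod_eq_of_lt (Nat.div_lt_self (Nat.pos_of_neZero n) (by norm_num))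
  unfold tradeSquare
  by_cases hc : (c : ℕ) % (n / 4) ∈ S
  · simp only [hc, and_true, if_true]
    by_cases h0 : r = 0
    · simp [h0, w]
    by_cases hrw : r = w
    · have : (w : ℕ) ≠ 0 := by rwa [Ne, ← Fin.val_zero n, ← Fin.ext_iff, ← hrw]
      rw [if_pos (.inr (hrw ▸ hw)), if_neg (hrw ▸ this), hrw, Equiv.swap_apply_right, zero_add]
    · have h0' : (r : ℕ) ≠ 0 := by rwa [Ne, ← Fin.val_zero n, ← Fin.ext_iff]
      have hw' : (r : ℕ) ≠ n / 4 := by rwa [Ne, ← hw, ← Fin.ext_iff]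
      simp [h0', hw', Equiv.swap_apply_of_ne_of_ne h0 hrw]
  · simp [hc]

theorem isLatinSquare_tradeSquare (hq : n / 4 ∣ n) : IsLatinSquare (tradeSquare n S) := by
  refine ⟨fun r => ?_, fun c => ?_⟩ <;> rw [← Finite.injective_iff_bijective] <;>
    simp only [tradeSquare_eq_swap_add]
  · refine Function.injective_ite_add fun c => ?_
    rw [Fin.val_add_mod_of_dvd hq _ _ (Fin.dvd_val_swap_sub hq r)]
  · split_ifs
    · exact (add_left_injective c).comp (Equiv.injective _)
    · exact add_left_injective c

theorem tradeSquare_sub_sub (r c : Fin n) :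
    tradeSquare n S r c - r - c =
      if (c : ℕ) % (n / 4) ∈ S then Equiv.swap 0 (Fin.ofNat n (n / 4)) r - r else 0 := by
  rw [tradeSquare_eq_swap_add]
  split_ifs <;> abel

theorem not_hasTransversal_tradeSquare (h4 : 4 ∣ n) : ¬ HasTransversal (tradeSquare n S) := by
  rintro ⟨K, hK⟩
  set w := Fin.ofNat n (n / 4)
  have hq : 0 < n / 4 := by have := NeZero.ne n; omega
  have hw : ∀ k, 0 < k → k < 4 → k • w ≠ 0 := fun k hk0 hk4 => by
    rw [Fin.nsmul_ofNat]
    refine Fin.ofNat_ne_zero (Nat.mul_pos hk0 hq) ?_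
    calc k * (n / 4) < 4 * (n / 4) := Nat.mul_lt_mul_of_pos_right hk4 hq
      _ = n := by omega
  have hw0 : (0 : Fin n) ≠ w := by simpa using (hw 1 one_pos (by norm_num)).symm
  obtain ⟨p, _, hp0, p', _, hpw, hsum⟩ :=
    Finset.exists_sum_eq_add_of_card_filter_fst_eq_one hK.1 hw0
      (fun p => tradeSquare n S p.1 p.2 - p.1 - p.2) fun p _ hp0 hpw => by
        rw [tradeSquare_sub_sub, Equiv.swap_apply_of_ne_of_ne hp0 hpw, sub_self, ite_self]
  have hhalf : Fin.ofNat n (n / 2) = 2 • w := by rw [Fin.nsmul_ofNat]; congr 1; omega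
  have key := hK.sum_sub_sub_eq_neg_sum_univ
  rw [hsum, Fin.sum_univ_eq_half (even_iff_two_dvd.2 (dvd_trans (by norm_num) h4)), hhalf,
    tradeSquare_sub_sub, tradeSquare_sub_sub, hp0, hpw, Equiv.swap_apply_left,
    Equiv.swap_apply_right] at key
  have contra : ∀ k x, 0 < k → k < 4 → x = -(2 • w) → k • w = 2 • w + x → False :=
    fun k x hk0 hk4 hx hk => hw k hk0 hk4 (by rw [hk, hx, add_neg_cancel])
  split_ifs at key
  · exact contra 2 _ (by norm_num) (by norm_num) key (by abel)
  · exact contra 3 _ (by norm_num) (by norm_num) key (by abel)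
  · exact contra 1 _ (by norm_num) (by norm_num) key (by abel)
  · exact contra 2 _ (by norm_num) (by norm_num) key (by abel)

end tradeSquare

theorem stmt16_general (n : ℕ) [NeZero n] (h4 : 4 ∣ n) :
    (IsLatinSquare (tradeSquare n {0}) ∧ ¬ HasTransversal (tradeSquare n {0})) ∧
    (IsLatinSquare (tradeSquare n {1}) ∧ ¬ HasTransversal (tradeSquare n {1})) ∧
    (IsLatinSquare (tradeSquare n {0, 1}) ∧
      ¬ HasTransversal (tradeSquare n {0, 1})) := by
  have hq : n / 4 ∣ n := Nat.div_dvd_of_dvd h4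
  exact ⟨⟨isLatinSquare_tradeSquare _ hq, not_hasTransversal_tradeSquare _ h4⟩,
    ⟨isLatinSquare_tradeSquare _ hq, not_hasTransversal_tradeSquare _ h4⟩,
    isLatinSquare_tradeSquare _ hq, not_hasTransversal_tradeSquare _ h4⟩

theorem stmt16 (n : ℕ) [NeZero n] (h4 : 4 ∣ n) (h8 : 8 ≤ n) :
    (IsLatinSquare (tradeSquare n {0}) ∧ ¬ HasTransversal (tradeSquare n {0})) ∧
    (IsLatinSquare (tradeSquare n {1}) ∧ ¬ HasTransversal (tradeSquare n {1})) ∧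
    (IsLatinSquare (tradeSquare n {0, 1}) ∧
      ¬ HasTransversal (tradeSquare n {0, 1})) :=
  stmt16_general n h4
end

section
/- Let n ≥ 8 be divisible by 4. Then there exists a latin square of order n containing a triplex (3-plex) but no transversal. -/
open scoped Classical

/-!
Take `n = 4 (a + h)` with `1 ≤ h ≤ a` and let `L i j = j + w(i, j mod 2) (mod n)`: the rows
`i > 2a` are cyclic (`w = i`), while on the band of rows `i ≤ 2a` the shift depends on the
parity of the column.

Along a transversal both the symbols and the columns run through all of `ℤ/n`, so the shifts
sum to `0 (mod n)`. Row by row the shift is squeezed between bounds whose totals are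
`∑_{i<n} i ∓ 2a`, and `∑_{i<n} i ≡ n/2 (mod n)` while `2a < n/2`: there is no transversal.

Three pointwise distinct permutations ("strands") give `3n` cells with three in every row and
every column. Exhibiting, for each symbol, three rows in which some strand carries it shows
that every symbol occurs exactly three times among these `3n` cells.
-/

open Finset Function

theorem two_mul_sum_range_add (a : ℕ) : 2 * ∑ i ∈ range a, i + a = a * a := by
  induction a with
  | zero => simp
  | succ a ih => rw [sum_range_succ]; linarith

theorem sum_range_mul_add (a c d : ℕ) :
    ∑ i ∈ range a, (c * i + d) = c * ∑ i ∈ range a, i + a * d := by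
  rw [sum_add_distrib, ← mul_sum, sum_const, card_range, smul_eq_mul]

-- `∑_{i<2k} i = k (2k - 1) ≡ k (mod 2k)`, so no multiple of `2k` lies within `d < k` of it.
theorem not_dvd_of_near_sum_range {n k d m : ℕ} (hn : n = 2 * k) (hd : d < k)
    (hlo : ∑ i ∈ range n, i ≤ m + d) (hhi : m ≤ ∑ i ∈ range n, i + d) : ¬ n ∣ m := by
  subst hn
  rintro ⟨q, rfl⟩
  have hS : 2 * ∑ i ∈ range (2 * k), i + 2 * k = 4 * (k * k) := by
    rw [two_mul_sum_range_add]; ring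
  have hq : k * q < k * k := by nlinarith
  have hq' : k * k < k * (q + 1) := by nlinarith
  have := Nat.lt_of_mul_lt_mul_left hq
  have := Nat.lt_of_mul_lt_mul_left hq'
  omega

theorem mod_eq_of_eq_or {n x v : ℕ} (hv : v < n) (hx : x = v ∨ x = v + n ∨ x = v + 2 * n) :
    x % n = v := by
  rcases hx with rfl | rfl | rfl
  · exact Nat.mod_eq_of_lt hv
  · rw [Nat.add_mod_right, Nat.mod_eq_of_lt hv]
  · rw [Nat.add_mul_mod_self_right, Nat.mod_eq_of_lt hv]

theorem eq_or_eq_add_of_mod_eq {n x y : ℕ} (hx : x < 2 * n) (hy : y < 2 * n)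
    (h : x % n = y % n) : x = y ∨ x = y + n ∨ y = x + n := by
  have key : ∀ z < 2 * n, z % n = if z < n then z else z - n := fun z hz => by
    split_ifs with hzn
    · exact Nat.mod_eq_of_lt hzn
    · rw [Nat.mod_eq_sub_mod (not_lt.1 hzn), Nat.mod_eq_of_lt (by omega)]
  rw [key x hx, key y hy] at h
  split_ifs at h <;> omega

theorem card_filter_eq_of_forall_le {ι κ : Type*} [Fintype κ] [DecidableEq κ] {K : Finset ι}
    {g : ι → κ} {k : ℕ} (hcard : #K = k * Fintype.card κ) (hle : ∀ s, k ≤ #{p ∈ K | g p = s})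
    (s : κ) : #{p ∈ K | g p = s} = k := by
  have hsum : ∑ s, #{p ∈ K | g p = s} = ∑ _s : κ, k := by
    rw [← card_eq_sum_card_fiberwise fun p _ => mem_univ (g p), hcard, sum_const, card_univ,
      smul_eq_mul, mul_comm]
  exact ((sum_eq_sum_iff_of_le fun s _ => hle s).1 hsum.symm s (mem_univ s)).symm

theorem sum_comp_eq_smul_of_card_filter {ι κ M : Type*} [Fintype κ] [DecidableEq κ]
    [AddCommMonoid M] {K : Finset ι} {g : ι → κ} {k : ℕ} (hg : ∀ s, #{p ∈ K | g p = s} = k)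
    (f : κ → M) : ∑ p ∈ K, f (g p) = k • ∑ s, f s := by
  rw [← sum_fiberwise K g, smul_sum]
  refine sum_congr rfl fun s _ => ?_
  rw [sum_congr rfl fun p hp => congrArg f (mem_filter.1 hp).2, sum_const, hg]

theorem le_card_of_injective {α : Type*} {k : ℕ} {S : Finset α} (f : Fin k → α)
    (hf : Injective f) (hS : ∀ m, f m ∈ S) : k ≤ #S := by
  simpa using card_le_card_of_injOn f (s := univ) (fun m _ => hS m) hf.injOn

section

variable {n : ℕ}

theorem IsPlex.of_le_card {L : Fin n → Fin n → Fin n} {k : ℕ} {K : Finset (Fin n × Fin n)}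
    (hcard : #K = k * n) (hrow : ∀ i, k ≤ #{p ∈ K | p.1 = i})
    (hcol : ∀ j, k ≤ #{p ∈ K | p.2 = j}) (hsym : ∀ s, k ≤ #{p ∈ K | L p.1 p.2 = s}) :
    IsPlex L k K := by
  have hcard : #K = k * Fintype.card (Fin n) := by rwa [Fintype.card_fin]
  exact ⟨card_filter_eq_of_forall_le hcard hrow, card_filter_eq_of_forall_le hcard hcol,
    card_filter_eq_of_forall_le hcard hsym⟩

def cellsOf {k : ℕ} (σ : Fin k → Fin n → Fin n) : Finset (Fin n × Fin n) :=
  univ.image fun q : Fin k × Fin n => (q.2, σ q.1 q.2)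

theorem isPlex_cellsOf {k : ℕ} (L : Fin n → Fin n → Fin n) (σ : Fin k → Fin n → Fin n)
    (hσ : ∀ m, Injective (σ m)) (hdisj : ∀ i, Injective (σ · i))
    (hsym : ∀ s, k ≤ #{i | ∃ m, L i (σ m i) = s}) : IsPlex L k (cellsOf σ) := by
  have mem : ∀ m i, (i, σ m i) ∈ cellsOf σ := fun m i => mem_image_of_mem _ (mem_univ (m, i))
  refine IsPlex.of_le_card ?_ (fun i => ?_) (fun j => ?_) (fun s => ?_)
  · rw [cellsOf, card_image_of_injective, card_univ, Fintype.card_prod, Fintype.card_fin,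
      Fintype.card_fin]
    rintro ⟨m, i⟩ ⟨m', i'⟩ h
    simp only [Prod.mk.injEq] at h
    obtain ⟨rfl, h⟩ := h
    rw [hdisj i h]
  · refine le_card_of_injective (fun m => (i, σ m i)) (fun m m' h => hdisj i ?_)
      fun m => mem_filter.2 ⟨mem m i, rfl⟩
    exact congrArg Prod.snd h
  · choose r hr using fun m => Finite.injective_iff_surjective.1 (hσ m) j
    refine le_card_of_injective (fun m => (r m, j)) (fun m m' h => hdisj (r m) ?_)
      fun m => mem_filter.2 ⟨hr m ▸ mem m (r m), rfl⟩
    show σ m (r m) = σ m' (r m)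
    rw [hr m, (Prod.mk.inj h).1, hr m']
  · refine (hsym s).trans ((card_le_card fun i hi => ?_).trans
      (card_image_le (f := Prod.fst)))
    obtain ⟨m, hm⟩ := (mem_filter.1 hi).2
    exact mem_image.2 ⟨(i, σ m i), mem_filter.2 ⟨mem m i, hm⟩, rfl⟩

/-- Along a transversal the symbols and the columns both run through all of `Fin n`, so the
shifts `W` along it add up to `0` modulo `n`. -/
theorem not_hasTransversal_of_val_eq {L : Fin n → Fin n → Fin n} (W : Fin n → Fin n → ℕ)
    (lo hi : Fin n → ℕ) (hL : ∀ i j, (L i j : ℕ) = (j + W i j) % n)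
    (hW : ∀ i j, lo i ≤ W i j ∧ W i j ≤ hi i)
    (hgap : ∀ m, ∑ i, lo i ≤ m → m ≤ ∑ i, hi i → ¬ n ∣ m) : ¬ HasTransversal L := by
  rintro ⟨K, hrow, hcol, hsym⟩
  have hsum : ∑ p ∈ K, ((L p.1 p.2 : ℕ) : ZMod n) = ∑ p ∈ K, ((p.2 : ℕ) : ZMod n) :=
    (sum_comp_eq_smul_of_card_filter hsym fun s => ((s : ℕ) : ZMod n)).trans
      (sum_comp_eq_smul_of_card_filter hcol fun s => ((s : ℕ) : ZMod n)).symm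
  have hdvd : n ∣ ∑ p ∈ K, W p.1 p.2 := by
    refine (ZMod.natCast_eq_zero_iff _ n).1 ?_
    simp only [hL, ZMod.natCast_mod, Nat.cast_add, sum_add_distrib] at hsum
    push_cast
    linear_combination hsum
  refine hgap _ ?_ ?_ hdvd
  · calc ∑ i, lo i = ∑ p ∈ K, lo p.1 := by rw [sum_comp_eq_smul_of_card_filter hrow, one_smul]
      _ ≤ _ := sum_le_sum fun p _ => (hW p.1 p.2).1
  · calc ∑ p ∈ K, W p.1 p.2 ≤ ∑ p ∈ K, hi p.1 := sum_le_sum fun p _ => (hW p.1 p.2).2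
      _ = ∑ i, hi i := by rw [sum_comp_eq_smul_of_card_filter hrow, one_smul]

def parityShiftSquare (n : ℕ) [NeZero n] (w : ℕ → ℕ → ℕ) (i j : Fin n) : Fin n :=
  Fin.ofNat n (j + w i (j % 2))

theorem isLatinSquare_parityShiftSquare [NeZero n] {w : ℕ → ℕ → ℕ} (hn : 2 ∣ n)
    (hpar : ∀ i, w i 0 % 2 = w i 1 % 2) (hinj : ∀ b < 2, Injective fun i : Fin n => w i b % n) :
    IsLatinSquare (parityShiftSquare n w) := by
  refine ⟨fun i => Finite.injective_iff_bijective.1 fun j j' h => ?_,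
    fun j => Finite.injective_iff_bijective.1 fun i i' h => ?_⟩
  · replace h : j + w i (j % 2) ≡ j' + w i (j' % 2) [MOD n] := by
      simpa [parityShiftSquare, Fin.ext_iff, Nat.ModEq] using h
    have hj : (j : ℕ) % 2 = j' % 2 := by
      have h2 := h.of_dvd hn
      unfold Nat.ModEq at h2
      have := hpar i
      rcases Nat.mod_two_eq_zero_or_one j with hj | hj <;>
        rcases Nat.mod_two_eq_zero_or_one j' with hj' | hj' <;>
        simp only [hj, hj'] at h2 ⊢ <;> omega
    rw [hj] at h
    exact Fin.ext (Nat.ModEq.eq_of_lt_of_lt (h.add_right_cancel' _) j.isLt j'.isLt)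
  · replace h : j + w i (j % 2) ≡ j + w i' (j % 2) [MOD n] := by
      simpa [parityShiftSquare, Fin.ext_iff, Nat.ModEq] using h
    exact hinj _ (Nat.mod_lt _ two_pos) (h.add_left_cancel' _)

end

namespace BandSquare

variable {n a h : ℕ}

/-- The shift of row `i` on columns of parity `b`: rows `i ≤ 2a` form the band, the other rows
are cyclic. -/
def shift (a i b : ℕ) : ℕ :=
  if i < a then 2 * i + 2 * b
  else if i = a then (if b = 0 then 2 * a else 0)
  else if i ≤ 2 * a then 2 * (i - a) - 1
  else i

def square (n a : ℕ) [NeZero n] : Fin n → Fin n → Fin n := parityShiftSquare n (shift a)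

theorem isLatinSquare_square [NeZero n] (hn : 2 ∣ n) (ha : 2 * a < n) :
    IsLatinSquare (square n a) := by
  refine isLatinSquare_parityShiftSquare hn (fun i => ?_) fun b hb i i' hii' => Fin.ext ?_
  · unfold shift; split_ifs <;> omega
  · have hlt : ∀ i : Fin n, shift a i b < n := fun i => by
      have := i.isLt; unfold shift; split_ifs <;> omega
    simp only [Nat.mod_eq_of_lt (hlt _)] at hii'
    unfold shift at hii'; split_ifs at hii' <;> omega

theorem sum_range_band {M : Type*} [AddCommMonoid M] (f : ℕ → M) (hn : 2 * a + 1 ≤ n) :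
    ∑ i ∈ range n, f i =
      ∑ i ∈ range a, (f i + f (a + 1 + i)) + f a + ∑ i ∈ Ico (2 * a + 1) n, f i := by
  rw [← sum_range_add_sum_Ico f hn, show 2 * a + 1 = a + 1 + a by ring, sum_range_add,
    sum_range_succ, sum_add_distrib]
  abel

theorem sum_range_min_shift (hn : 2 * a + 1 ≤ n) :
    ∑ i ∈ range n, min (shift a i 0) (shift a i 1) + 2 * a = ∑ i ∈ range n, i := by
  have hband : ∀ i ∈ range a,
      min (shift a i 0) (shift a i 1) + min (shift a (a + 1 + i) 0) (shift a (a + 1 + i) 1) =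
        4 * i + 1 := fun i hi => by
    have := mem_range.1 hi; simp only [shift]; split_ifs <;> omega
  have htail : ∀ i ∈ Ico (2 * a + 1) n, min (shift a i 0) (shift a i 1) = i := fun i hi => by
    have := (mem_Ico.1 hi).1; simp only [shift]; split_ifs <;> omega
  have hid : ∀ i ∈ range a, i + (a + 1 + i) = 2 * i + (a + 1) := fun i _ => by ring
  have hmid : min (shift a a 0) (shift a a 1) = 0 := by simp [shift]
  rw [sum_range_band _ hn, sum_range_band (fun i => i) hn, sum_congr rfl hband,
    sum_congr rfl htail, sum_congr rfl hid, sum_range_mul_add, sum_range_mul_add, hmid]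
  nlinarith [two_mul_sum_range_add a]

theorem sum_range_max_shift (hn : 2 * a + 1 ≤ n) :
    ∑ i ∈ range n, max (shift a i 0) (shift a i 1) = ∑ i ∈ range n, i + 2 * a := by
  have hband : ∀ i ∈ range a,
      max (shift a i 0) (shift a i 1) + max (shift a (a + 1 + i) 0) (shift a (a + 1 + i) 1) =
        4 * i + 3 := fun i hi => by
    have := mem_range.1 hi; simp only [shift]; split_ifs <;> omega
  have htail : ∀ i ∈ Ico (2 * a + 1) n, max (shift a i 0) (shift a i 1) = i := fun i hi => by
    have := (mem_Ico.1 hi).1; simp only [shift]; split_ifs <;> omega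
  have hid : ∀ i ∈ range a, i + (a + 1 + i) = 2 * i + (a + 1) := fun i _ => by ring
  have hmid : max (shift a a 0) (shift a a 1) = 2 * a := by simp [shift]
  rw [sum_range_band _ hn, sum_range_band (fun i => i) hn, sum_congr rfl hband,
    sum_congr rfl htail, sum_congr rfl hid, sum_range_mul_add, sum_range_mul_add, hmid]
  nlinarith [two_mul_sum_range_add a]

theorem not_hasTransversal_square [NeZero n] (hn : n = 4 * (a + h)) (hh : 1 ≤ h) :
    ¬ HasTransversal (square n a) := by
  refine not_hasTransversal_of_val_eq (fun i j => shift a i (j % 2))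
    (fun i => min (shift a i 0) (shift a i 1)) (fun i => max (shift a i 0) (shift a i 1))
    (fun i j => Fin.val_ofNat _ _) (fun i j => ?_) fun m hlo hhi => ?_
  · rcases Nat.mod_two_eq_zero_or_one j with hj | hj <;> simp [hj]
  · rw [Fin.sum_univ_eq_sum_range (fun i => min (shift a i 0) (shift a i 1))] at hlo
    rw [Fin.sum_univ_eq_sum_range (fun i => max (shift a i 0) (shift a i 1))] at hhi
    have hband : 2 * a + 1 ≤ n := by omega
    have := sum_range_min_shift hband
    have := sum_range_max_shift hband
    exact not_dvd_of_near_sum_range (k := 2 * (a + h)) (d := 2 * a) (by omega) (by omega)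
      (by omega) (by omega)

/-- The column of strand `m` in row `i`, before reduction modulo `n`. -/
def column (a h : ℕ) : Fin 3 → ℕ → ℕ
  | 0, i => if i < a then 2 * i + 2 else if i = a then 1
      else if i ≤ 2 * a then 2 * (i - a) + 1 else i + 1
  | 1, i => if i < h then 2 * i + 4 * a + 2 else if i < a then 2 * i + 4 * a + 3
      else if i = a then 4 * a + 1 else if i ≤ a + h then 2 * i + 2 * a + 1
      else if i ≤ 2 * a then 2 * i + 2 * a else i + 4 * a + 1
  | 2, i => if i < a then 2 * i else if i = a then 2 * a
      else if i ≤ 2 * a then 2 * (i - a) - 1 else i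

def strand (n a h : ℕ) [NeZero n] (m : Fin 3) (i : Fin n) : Fin n :=
  Fin.ofNat n (column a h m i)

theorem column_lt (hn : n = 4 * (a + h)) (hh : 1 ≤ h) (m : Fin 3) {i : ℕ} (hi : i < n) :
    column a h m i < 2 * n := by
  fin_cases m <;> simp only [column] <;> split_ifs <;> omega

theorem strand_injective [NeZero n] (hn : n = 4 * (a + h)) (hh : 1 ≤ h) (hha : h ≤ a)
    (m : Fin 3) :
    Injective (strand n a h m) := by
  intro i i' hii'
  have := i.isLt; have := i'.isLt
  have hcol := eq_or_eq_add_of_mod_eq (column_lt hn hh m i.isLt) (column_lt hn hh m i'.isLt)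
    (by simpa [strand, Fin.ext_iff] using hii')
  apply Fin.ext
  fin_cases m <;> simp only [column] at hcol <;> split_ifs at hcol <;> omega

theorem strand_apply_injective [NeZero n] (hn : n = 4 * (a + h)) (hh : 1 ≤ h) (hha : h ≤ a)
    (i : Fin n) :
    Injective (strand n a h · i) := by
  intro m m' hmm'
  have := i.isLt
  have hcol := eq_or_eq_add_of_mod_eq (column_lt hn hh m i.isLt) (column_lt hn hh m' i.isLt)
    (by simpa [strand, Fin.ext_iff] using hmm')
  fin_cases m <;> fin_cases m' <;> simp only [column] at hcol <;>
    first | rfl | (split_ifs at hcol <;> omega)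

/-- The symbol in row `i` of strand `m`, before reduction modulo `n` (see `column_add_shift`). -/
def symbol (a h : ℕ) : Fin 3 → ℕ → ℕ
  | 0, i => if i < a then 4 * i + 2 else if i = a then 1
      else if i ≤ 2 * a then 4 * (i - a) else 2 * i + 1
  | 1, i => if i < h then 4 * i + 4 * a + 2 else if i < a then 4 * i + 4 * a + 5
      else if i = a then 4 * a + 1 else if i ≤ a + h then 4 * i
      else if i ≤ 2 * a then 4 * i - 1 else 2 * i + 4 * a + 1
  | 2, i => if i < a then 4 * i else if i = a then 4 * a
      else if i ≤ 2 * a then 4 * (i - a) - 2 else 2 * i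

theorem column_add_shift (hha : h ≤ a) (m : Fin 3) (i : ℕ) :
    column a h m i + shift a i (column a h m i % 2) = symbol a h m i := by
  fin_cases m <;> simp only [column, symbol, shift] <;> grind

theorem val_square_strand [NeZero n] (hn : 2 ∣ n) (hha : h ≤ a) (m : Fin 3) (i : Fin n) :
    (square n a i (strand n a h m i) : ℕ) = symbol a h m i % n := by
  simp only [square, parityShiftSquare, strand, Fin.val_ofNat, Nat.mod_mod_of_dvd _ hn,
    Nat.mod_add_mod, column_add_shift hha]

-- The unreduced symbol is below `3n`, hence the three candidate values.
def Hits (a h v : ℕ) (m : Fin 3) (i : ℕ) : Prop :=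
  i < 4 * (a + h) ∧ (symbol a h m i = v ∨ symbol a h m i = v + 4 * (a + h) ∨
    symbol a h m i = v + 2 * (4 * (a + h)))

def ThreeHits (a h v : ℕ) : Prop :=
  ∃ i₁ i₂ i₃ : ℕ, ∃ m₁ m₂ m₃ : Fin 3, i₁ ≠ i₂ ∧ i₁ ≠ i₃ ∧ i₂ ≠ i₃ ∧
    Hits a h v m₁ i₁ ∧ Hits a h v m₂ i₂ ∧ Hits a h v m₃ i₃

theorem threeHits_even {e : ℕ} (hh : 1 ≤ h) (hha : h ≤ a) (he : 2 * e < 4 * (a + h)) :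
    ThreeHits a h (2 * e) := by
  by_cases he0 : e = 0
  · refine ⟨a + h, 0, 2 * (a + h), 1, 2, 2, by omega, by omega, by omega, ?_, ?_, ?_⟩ <;>
      simp only [Hits, symbol] <;> split_ifs <;> omega
  by_cases hsmall : e ≤ 2 * a
  · by_cases he2 : e % 2 = 1
    · refine ⟨e / 2, a + (e + 1) / 2, e + 2 * (a + h), 0, 2, 2, by omega, by omega, by omega,
        ?_, ?_, ?_⟩ <;> simp only [Hits, symbol] <;> split_ifs <;> omega
    · refine ⟨a + e / 2, e / 2, e + 2 * (a + h), 0, 2, 2, by omega, by omega, by omega,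
        ?_, ?_, ?_⟩ <;> simp only [Hits, symbol] <;> split_ifs <;> omega
  · by_cases he2 : e % 2 = 1
    · refine ⟨(e - 2 * a - 1) / 2, e, e + 2 * (a + h), 1, 2, 2, by omega, by omega, by omega,
        ?_, ?_, ?_⟩ <;> simp only [Hits, symbol] <;> split_ifs <;> omega
    · refine ⟨e / 2, e, e + 2 * (a + h), 1, 2, 2, by omega, by omega, by omega,
        ?_, ?_, ?_⟩ <;> simp only [Hits, symbol] <;> split_ifs <;> omega

theorem threeHits_odd {e : ℕ} (hh : 1 ≤ h) (hha : h ≤ a) (he : 2 * e + 1 < 4 * (a + h)) :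
    ThreeHits a h (2 * e + 1) := by
  by_cases he0 : e = 0
  · refine ⟨a, 2 * (a + h), 2 * h + 2 * (a + h), 0, 0, 1, by omega, by omega, by omega,
      ?_, ?_, ?_⟩ <;> simp only [Hits, symbol] <;> split_ifs <;> omega
  by_cases hea : e = 2 * a
  · refine ⟨a, 2 * a + 2 * (a + h), 2 * (a + h), 1, 0, 1, by omega, by omega, by omega,
      ?_, ?_, ?_⟩ <;> simp only [Hits, symbol] <;> split_ifs <;> omega
  by_cases hbig : 2 * a < e
  · refine ⟨e, e + 2 * (a + h), e - 2 * a + 2 * (a + h), 0, 0, 1, by omega, by omega,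
      by omega, ?_, ?_, ?_⟩ <;> simp only [Hits, symbol] <;> split_ifs <;> omega
  by_cases hmid : 2 * a - 2 * h < e
  · refine ⟨e + 2 * (a + h), e + 2 * h, e + 2 * h + 2 * (a + h), 0, 1, 1, by omega, by omega,
      by omega, ?_, ?_, ?_⟩ <;> simp only [Hits, symbol] <;> split_ifs <;> omega
  by_cases he2 : e % 2 = 0
  · refine ⟨h + (e - 2) / 2, e + 2 * (a + h), e + 2 * h + 2 * (a + h), 1, 0, 1, by omega,
      by omega, by omega, ?_, ?_, ?_⟩ <;> simp only [Hits, symbol] <;> split_ifs <;> omega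
  · refine ⟨a + h + (e + 1) / 2, e + 2 * (a + h), e + 2 * h + 2 * (a + h), 1, 0, 1, by omega,
      by omega, by omega, ?_, ?_, ?_⟩ <;> simp only [Hits, symbol] <;> split_ifs <;> omega

theorem three_le_card_rows_strand_eq [NeZero n] (hn : n = 4 * (a + h)) (hh : 1 ≤ h)
    (hha : h ≤ a) (s : Fin n) : 3 ≤ #{i | ∃ m, square n a i (strand n a h m i) = s} := by
  have hits : ThreeHits a h s := by
    obtain ⟨e, hs | hs⟩ := Nat.even_or_odd' s
    · rw [hs]; exact threeHits_even hh hha (hs ▸ hn ▸ s.isLt)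
    · rw [hs]; exact threeHits_odd hh hha (hs ▸ hn ▸ s.isLt)
  obtain ⟨i₁, i₂, i₃, m₁, m₂, m₃, h₁₂, h₁₃, h₂₃, H₁, H₂, H₃⟩ := hits
  have mem : ∀ {m i} (H : Hits a h s m i),
      (⟨i, hn ▸ H.1⟩ : Fin n) ∈ ({i | ∃ m, square n a i (strand n a h m i) = s} : Finset _) := by
    refine fun {m i} H => mem_filter.2 ⟨mem_univ _, m, Fin.ext ?_⟩
    rw [val_square_strand ⟨2 * (a + h), by omega⟩ hha]
    exact mod_eq_of_eq_or s.isLt (hn ▸ H.2)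
  exact two_lt_card.2 ⟨_, mem H₁, _, mem H₂, _, mem H₃, Fin.ne_of_val_ne h₁₂,
    Fin.ne_of_val_ne h₁₃, Fin.ne_of_val_ne h₂₃⟩

theorem isPlex_cellsOf_strand [NeZero n] (hn : n = 4 * (a + h)) (hh : 1 ≤ h) (hha : h ≤ a) :
    IsPlex (square n a) 3 (cellsOf (strand n a h)) :=
  isPlex_cellsOf _ _ (strand_injective hn hh hha) (strand_apply_injective hn hh hha)
    (three_le_card_rows_strand_eq hn hh hha)

end BandSquare

theorem stmt17 (n : ℕ) (h4 : 4 ∣ n) (h8 : 8 ≤ n) :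
    ∃ L : Fin n → Fin n → Fin n, IsLatinSquare L ∧
      (∃ K, IsPlex L 3 K) ∧ ¬ HasTransversal L := by
  obtain ⟨a, h, hh, hha, hn⟩ : ∃ a h, 1 ≤ h ∧ h ≤ a ∧ n = 4 * (a + h) :=
    ⟨n / 4 - n / 8, n / 8, by omega, by omega, by omega⟩
  have : NeZero n := ⟨by omega⟩
  exact ⟨BandSquare.square n a, BandSquare.isLatinSquare_square ⟨2 * (a + h), by omega⟩ (by omega),
    ⟨cellsOf (BandSquare.strand n a h), BandSquare.isPlex_cellsOf_strand hn hh hha⟩,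
    BandSquare.not_hasTransversal_square hn hh⟩
end

section
/- For even n → ∞, the number of species (main classes) of transversal-free latin squares of order n is at least n^{n^{3/2}(1/2 − o(1))}. Concretely: for every ε > 0 there exists N such that for all even n ≥ N, the number of latin squares of order n with no transversal is at least n^{(1/2−ε)n^{3/2}}, and since each species contains at most 6(n!)³ latin squares, the same asymptotic lower bound holds for the number of species. -/
open scoped Classical

/-- The triples (row, column, symbol) of a latin square, encoded as functions `Fin 3 → Fin n`. -/
def triples {n : ℕ} (L : Fin n → Fin n → Fin n) : Set (Fin 3 → Fin n) :=
  {v | L (v 0) (v 1) = v 2}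

/-- Two latin squares are in the same species if one is obtained from the other by
permuting rows, columns and symbols and permuting the three coordinate roles. -/
def SameSpecies {n : ℕ} (L₁ L₂ : Fin n → Fin n → Fin n) : Prop :=
  ∃ (σ : Equiv.Perm (Fin 3)) (f : Fin 3 → Equiv.Perm (Fin n)),
    ∀ v : Fin 3 → Fin n, v ∈ triples L₁ ↔ (fun i => f i (v (σ i))) ∈ triples L₂

/-!
The squares are perturbations of the cyclic square `(i, j) ↦ i + j` of even order `n`. Its first
`3R` rows, `R = ⌊n / 13⌋`, are grouped into blocks of three rows, and on every column pair
`{2t, 2t+1}` each block can be filled in two ways, which gives `2 ^ (R n / 2)` latin squares.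
Every entry stays within distance `2` of `i + j` mod `n`, and only in those `3R < n / 4` rows.
Along a transversal the deviations from `i + j` must sum to `n / 2` mod `n` (the Δ-lemma), so
there is no transversal. Finally `2 ^ (n² / 104)` beats `n ^ (n ^ (3/2) / 2) * 6 (n!)³`, and each
species contains at most `6 (n!)³` squares.
-/

lemma Nat.eq_of_add_mod_eq_add_mod {n j a b : ℕ} (ha : a < n) (hb : b < n)
    (h : (j + a) % n = (j + b) % n) : a = b :=
  (Nat.ModEq.add_left_cancel' j h).eq_of_lt_of_lt ha hb

lemma Nat.eq_or_eq_add_of_mod_eq {n a b : ℕ} (ha : a < 2 * n) (hb : b < 2 * n)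
    (h : a % n = b % n) : a = b ∨ a = b + n ∨ b = a + n := by
  have reduce : ∀ x < 2 * n, x % n = x ∨ (n ≤ x ∧ x % n = x - n) := fun x hx => by
    rcases lt_or_ge x n with hxn | hxn
    · exact .inl (Nat.mod_eq_of_lt hxn)
    · exact .inr ⟨hxn, by rw [Nat.mod_eq_sub_mod hxn, Nat.mod_eq_of_lt (by omega)]⟩
  rcases reduce a ha with h₁ | h₁ <;> rcases reduce b hb with h₂ | h₂ <;> omega

lemma Nat.injOn_add_mod_of_step {n : ℕ} {v : ℕ → ℕ} (hv : ∀ j, v j < n)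
    (hstep : ∀ j < n, ∀ δ, 0 < δ → v ((j + δ) % n) + δ ≠ v j) :
    Set.InjOn (fun j => (j + v j) % n) (Set.Iio n) := by
  suffices key : ∀ j j', j < n → j' < n → (j + v j) % n = (j' + v j') % n → ¬ j < j' by
    intro j hj j' hj' h
    by_contra hne
    rcases Nat.lt_or_gt_of_ne hne with hlt | hlt
    exacts [key j j' hj hj' h hlt, key j' j hj' hj h.symm hlt]
  intro j j' hj hj' h hlt
  have hvj := hv j
  have hvj' := hv j'
  rcases Nat.eq_or_eq_add_of_mod_eq (by omega) (by omega) h with he | he | he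
  · refine absurd ?_ (hstep j hj (j' - j) (by omega))
    rw [show j + (j' - j) = j' by omega, Nat.mod_eq_of_lt hj']
    omega
  · omega
  · refine absurd ?_ (hstep j' hj' (j + n - j') (by omega))
    rw [show j' + (j + n - j') = j + n by omega, Nat.add_mod_right, Nat.mod_eq_of_lt hj]
    omega

lemma Finset.sum_comp_eq_sum_of_card_filter_eq_one {ι κ M : Type*} [Fintype κ]
    [DecidableEq κ] [AddCommMonoid M] {K : Finset ι} {g : ι → κ}
    (hg : ∀ y, (K.filter fun p => g p = y).card = 1) (F : κ → M) :
    ∑ p ∈ K, F (g p) = ∑ y, F y := by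
  rw [← Finset.sum_fiberwise_of_maps_to (fun p _ => Finset.mem_univ (g p))]
  refine Finset.sum_congr rfl fun y _ => ?_
  rw [Finset.sum_congr rfl fun p hp => by rw [(Finset.mem_filter.mp hp).2], Finset.sum_const,
    hg y, one_smul]

lemma Fin.sum_natCast_zmod_add_self (h : ℕ) :
    ∑ i : Fin (h + h), ((i : ℕ) : ZMod (h + h)) = -h := by
  have gauss : (∑ i ∈ Finset.range (h + h), i) + h = (h + h) * h := by
    have := Finset.sum_range_id_mul_two (h + h)
    rcases h with _ | h
    · simp
    · rw [show h + 1 + (h + 1) - 1 = h + h + 1 by omega] at this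
      nlinarith
  rw [Fin.sum_univ_eq_sum_range (fun i => ((i : ℕ) : ZMod (h + h))), eq_neg_iff_add_eq_zero,
    ← Nat.cast_sum, ← Nat.cast_add, gauss, Nat.cast_mul, ZMod.natCast_self, zero_mul]

lemma Nat.card_le_card_quot_mul_card {α P : Type*} [Finite α] [Finite P] {r : α → α → Prop}
    (hr : Equivalence r) (R : α → P → α → Prop) (hR : ∀ x y, r x y → ∃ p, R x p y)
    (hunique : ∀ x p y y', R x p y → R x p y' → y = y') :
    Nat.card α ≤ Nat.card (Quot r) * Nat.card P := by
  have hrep : ∀ x, r (Quot.mk r x).out x := fun x =>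
    hr.eqvGen_iff.mp (Quot.eqvGen_exact (Quot.out_eq (Quot.mk r x)))
  choose w hw using fun x => hR _ x (hrep x)
  rw [← Nat.card_prod]
  refine Nat.card_le_card_of_injective (fun x => (Quot.mk r x, w x)) fun x y hxy => ?_
  obtain ⟨hq, hwxy⟩ := Prod.ext_iff.mp hxy
  simp only at hq hwxy
  exact hunique _ _ _ _ (hw x) (by rw [hq, hwxy]; exact hw y)

section Species

variable {n : ℕ}

lemma triples_injective : Function.Injective (triples : (Fin n → Fin n → Fin n) → _) := by
  intro L₁ L₂ h
  funext i j
  have : ![i, j, L₁ i j] ∈ triples L₂ := h ▸ (show ![i, j, L₁ i j] ∈ triples L₁ from rfl)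
  exact this.symm

lemma SameSpecies.refl (L : Fin n → Fin n → Fin n) : SameSpecies L L :=
  ⟨1, fun _ => 1, fun _ => Iff.rfl⟩

lemma SameSpecies.symm {L₁ L₂ : Fin n → Fin n → Fin n} (h : SameSpecies L₁ L₂) :
    SameSpecies L₂ L₁ := by
  obtain ⟨σ, f, hf⟩ := h
  refine ⟨σ⁻¹, fun i => (f (σ⁻¹ i))⁻¹, fun v => ?_⟩
  rw [hf]
  simp

lemma SameSpecies.trans {L₁ L₂ L₃ : Fin n → Fin n → Fin n} (h₁₂ : SameSpecies L₁ L₂)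
    (h₂₃ : SameSpecies L₂ L₃) : SameSpecies L₁ L₃ := by
  obtain ⟨σ, f, hf⟩ := h₁₂
  obtain ⟨τ, g, hg⟩ := h₂₃
  exact ⟨τ.trans σ, fun i => g i * f (τ i), fun v => (hf v).trans (hg _)⟩

lemma eq_of_sameSpecies_witness {L L₁ L₂ : Fin n → Fin n → Fin n} {σ : Equiv.Perm (Fin 3)}
    {f : Fin 3 → Equiv.Perm (Fin n)}
    (h₁ : ∀ v, v ∈ triples L ↔ (fun i => f i (v (σ i))) ∈ triples L₁)
    (h₂ : ∀ v, v ∈ triples L ↔ (fun i => f i (v (σ i))) ∈ triples L₂) : L₁ = L₂ := by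
  refine triples_injective (Set.ext fun w => ?_)
  set v : Fin 3 → Fin n := fun k => (f (σ⁻¹ k))⁻¹ (w (σ⁻¹ k))
  have hw : (fun i => f i (v (σ i))) = w := by
    funext i; simp [v]
  rw [← hw]
  exact (h₁ v).symm.trans (h₂ v)

theorem card_le_card_quot_sameSpecies_mul (P : (Fin n → Fin n → Fin n) → Prop) :
    Nat.card {L // P L} ≤
      Nat.card (Quot fun L₁ L₂ : {L // P L} => SameSpecies L₁.1 L₂.1) * (6 * n.factorial ^ 3) := by
  have hcard : Nat.card (Equiv.Perm (Fin 3) × (Fin 3 → Equiv.Perm (Fin n))) =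
      6 * n.factorial ^ 3 := by
    simp [Nat.card_eq_fintype_card, Fintype.card_perm, Nat.factorial]
  rw [← hcard]
  exact Nat.card_le_card_quot_mul_card ⟨fun L => .refl L.1, .symm, .trans⟩
    (fun L w L' => ∀ v, v ∈ triples L.1 ↔ (fun i => w.2 i (v (w.1 i))) ∈ triples L'.1)
    (fun _ _ ⟨σ, f, h⟩ => ⟨(σ, f), h⟩)
    (fun _ _ _ _ h₁ h₂ => Subtype.ext (eq_of_sameSpecies_witness h₁ h₂))

end Species

/-- The Δ-lemma: the deviations from `i + j` along a transversal sum to `n / 2` mod `n`. -/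
theorem not_hasTransversal_of_abs_deviation_le {n : ℕ} (hn : Even n) (L : Fin n → Fin n → Fin n)
    (d : Fin n → Fin n → ℤ) (D : Fin n → ℕ)
    (hL : ∀ i j, ((L i j : ℕ) : ZMod n) = (i : ℕ) + (j : ℕ) + d i j)
    (hd : ∀ i j, |d i j| ≤ D i) (hD : 2 * ∑ i, D i < n) : ¬ HasTransversal L := by
  rintro ⟨K, hrow, hcol, hsym⟩
  obtain ⟨h, rfl⟩ := hn
  set T := ∑ p ∈ K, d p.1 p.2
  have hT_le : |T| < h := by
    have hD' : ((∑ i, D i : ℕ) : ℤ) < h := by omega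
    calc |T| ≤ ∑ p ∈ K, |d p.1 p.2| := Finset.abs_sum_le_sum_abs _ _
      _ ≤ ∑ p ∈ K, (D p.1 : ℤ) := Finset.sum_le_sum fun p _ => hd _ _
      _ = ∑ i, (D i : ℤ) :=
        Finset.sum_comp_eq_sum_of_card_filter_eq_one (g := Prod.fst) hrow (fun i => (D i : ℤ))
      _ < h := by exact_mod_cast hD'
  have hT_mod : ((T - h : ℤ) : ZMod (h + h)) = 0 := by
    have hsum := Finset.sum_congr rfl fun p (_ : p ∈ K) => hL p.1 p.2
    simp only [Finset.sum_add_distrib] at hsum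
    rw [Finset.sum_comp_eq_sum_of_card_filter_eq_one
        (g := fun p : Fin (h + h) × Fin (h + h) => L p.1 p.2) hsym
        (fun s => ((s : ℕ) : ZMod (h + h))),
      Finset.sum_comp_eq_sum_of_card_filter_eq_one (g := Prod.fst) hrow
        (fun s => ((s : ℕ) : ZMod (h + h))),
      Finset.sum_comp_eq_sum_of_card_filter_eq_one (g := Prod.snd) hcol
        (fun s => ((s : ℕ) : ZMod (h + h))),
      Fin.sum_natCast_zmod_add_self, ← Int.cast_sum] at hsum
    push_cast
    linear_combination -hsum
  have hdvd : ((h + h : ℕ) : ℤ) ∣ T - h := (ZMod.intCast_zmod_eq_zero_iff_dvd _ _).mp hT_mod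
  rw [abs_lt] at hT_le
  have := Int.eq_zero_of_abs_lt_dvd hdvd (by rw [abs_lt]; push_cast; constructor <;> linarith)
  linarith

/-- Offsets of row `p` of a three-row block at position `s` of a column pair `{2t, 2t+1}`:
rows `0` and `1` carry the pair onto `{2t+1, 2t+2}` by the patterns `(1,1)` and `(2,0)`,
exchanged by the bit `b`, and row `2` carries it onto `{2t, 2t+3}`. -/
def arcOffset : Bool → ℕ → ℕ → ℕ
  | _, 2, 0 => 0
  | _, 2, _ => 2
  | false, 0, _ => 1
  | true, 1, _ => 1
  | _, _, 0 => 2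
  | _, _, _ => 0

lemma arcOffset_le_two (b : Bool) (p s : ℕ) : arcOffset b p s ≤ 2 := by
  unfold arcOffset; split <;> norm_num

lemma arcOffset_step_within : ∀ b, ∀ p < 3, arcOffset b p 1 + 1 ≠ arcOffset b p 0 := by
  decide

lemma arcOffset_step_across : ∀ b b', ∀ p < 3, arcOffset b' p 0 + 1 ≠ arcOffset b p 1 := by
  decide

lemma arcOffset_step_two :
    ∀ b b', ∀ p < 3, ∀ s < 2, arcOffset b' p s + 2 ≠ arcOffset b p s := by
  decide

lemma eq_of_arcOffset_eq :
    ∀ b, ∀ s < 2, ∀ p < 3, ∀ p' < 3, arcOffset b p s = arcOffset b p' s → p = p' := by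
  decide

lemma arcOffset_zero_zero_injective : Function.Injective fun b => arcOffset b 0 0 := by
  decide

def arcShift (R : ℕ) (c : ℕ → ℕ → Bool) (i j : ℕ) : ℕ :=
  3 * (i / 3) + if i < 3 * R then arcOffset (c (i / 3) (j / 2)) (i % 3) (j % 2) else i % 3

def arcSquare (n R : ℕ) (c : ℕ → ℕ → Bool) (i j : Fin n) : Fin n :=
  ⟨(j + arcShift R c i j) % n, Nat.mod_lt _ j.pos⟩

def extendChoice {R m : ℕ} (χ : Fin R → Fin m → Bool) (a t : ℕ) : Bool :=
  if h : a < R ∧ t < m then χ ⟨a, h.1⟩ ⟨t, h.2⟩ else false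

section ArcSquare

variable {n R : ℕ} {c : ℕ → ℕ → Bool}

lemma arcShift_of_le {i : ℕ} (hi : 3 * R ≤ i) (j : ℕ) : arcShift R c i j = i := by
  simp only [arcShift, if_neg (not_lt.mpr hi)]
  omega

lemma arcShift_lt_three_mul {i : ℕ} (hi : i < 3 * R) (j : ℕ) : arcShift R c i j < 3 * R := by
  have := arcOffset_le_two (c (i / 3) (j / 2)) (i % 3) (j % 2)
  simp only [arcShift, if_pos hi]
  omega

lemma arcShift_lt (hR : 3 * R ≤ n) {i : ℕ} (hi : i < n) (j : ℕ) : arcShift R c i j < n := by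
  rcases lt_or_ge i (3 * R) with hiR | hiR
  · exact (arcShift_lt_three_mul hiR j).trans_le hR
  · rwa [arcShift_of_le hiR]

lemma arcShift_step (hn : Even n) (i : ℕ) :
    ∀ j < n, ∀ δ, 0 < δ → arcShift R c i ((j + δ) % n) + δ ≠ arcShift R c i j := by
  intro j hj δ hδ
  rcases lt_or_ge i (3 * R) with hiR | hiR
  swap
  · rw [arcShift_of_le hiR, arcShift_of_le hiR]; omega
  simp only [arcShift, if_pos hiR]
  have hp : i % 3 < 3 := Nat.mod_lt _ (by norm_num)
  have hpar : (j + δ) % n % 2 = (j + δ) % 2 := Nat.mod_mod_of_dvd _ (even_iff_two_dvd.mp hn)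
  have hle := arcOffset_le_two (c (i / 3) (j / 2)) (i % 3) (j % 2)
  obtain hδ | rfl | rfl : 2 < δ ∨ δ = 1 ∨ δ = 2 := by omega
  · omega
  · obtain hs | hs : j % 2 = 0 ∨ j % 2 = 1 := by omega
    · obtain ⟨k, rfl⟩ := hn
      have hj1 : (j + 1) % (k + k) = j + 1 := Nat.mod_eq_of_lt (by omega)
      rw [hj1, show (j + 1) / 2 = j / 2 by omega, show (j + 1) % 2 = 1 by omega, hs]
      have := arcOffset_step_within (c (i / 3) (j / 2)) _ hp
      omega
    · rw [show (j + 1) % n % 2 = 0 by omega, hs]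
      have := arcOffset_step_across (c (i / 3) (j / 2)) (c (i / 3) ((j + 1) % n / 2)) _ hp
      omega
  · rw [show (j + 2) % n % 2 = j % 2 by omega]
    have := arcOffset_step_two (c (i / 3) (j / 2)) (c (i / 3) ((j + 2) % n / 2)) _ hp _
      (Nat.mod_lt j (by norm_num))
    omega

lemma arcShift_left_injective (j : ℕ) : Function.Injective fun i => arcShift R c i j := by
  intro i i' h
  simp only at h
  rcases lt_or_ge i (3 * R) with hi | hi <;> rcases lt_or_ge i' (3 * R) with hi' | hi'
  · have hle := arcOffset_le_two (c (i / 3) (j / 2)) (i % 3) (j % 2)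
    have hle' := arcOffset_le_two (c (i' / 3) (j / 2)) (i' % 3) (j % 2)
    simp only [arcShift, if_pos hi, if_pos hi'] at h
    have hq : i / 3 = i' / 3 := by omega
    rw [hq] at h
    have := eq_of_arcOffset_eq (c (i' / 3) (j / 2)) _ (Nat.mod_lt j (by norm_num)) _
      (Nat.mod_lt i (by norm_num)) _ (Nat.mod_lt i' (by norm_num)) (by omega)
    omega
  · have := arcShift_lt_three_mul (c := c) hi j
    rw [h, arcShift_of_le hi'] at this; omega
  · have := arcShift_lt_three_mul (c := c) hi' j
    rw [← h, arcShift_of_le hi] at this; omega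
  · rwa [arcShift_of_le hi, arcShift_of_le hi'] at h

theorem arcSquare_isLatinSquare (hn : Even n) (hR : 3 * R ≤ n) :
    IsLatinSquare (arcSquare n R c) := by
  refine ⟨fun i => ?_, fun j => ?_⟩ <;> rw [← Finite.injective_iff_bijective]
  · intro j j' h
    exact Fin.ext <| Nat.injOn_add_mod_of_step (arcShift_lt hR i.isLt) (arcShift_step hn i)
      j.isLt j'.isLt (congrArg Fin.val h)
  · intro i i' h
    exact Fin.ext <| arcShift_left_injective j <| Nat.eq_of_add_mod_eq_add_mod
      (arcShift_lt hR i.isLt j) (arcShift_lt hR i'.isLt j) (congrArg Fin.val h)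

theorem arcSquare_not_hasTransversal (hn : Even n) (hR : 12 * R < n) :
    ¬ HasTransversal (arcSquare n R c) := by
  refine not_hasTransversal_of_abs_deviation_le hn _ (fun i j => (arcShift R c i j : ℤ) - i)
    (fun i => if (i : ℕ) < 3 * R then 2 else 0) (fun i j => ?_) (fun i j => ?_) ?_
  · simp only [arcSquare, ZMod.natCast_mod]
    push_cast
    ring
  · split_ifs with hi
    · have := arcOffset_le_two (c (i / 3) (j / 2)) (i % 3) (j % 2)
      simp only [arcShift, if_pos hi]
      rw [abs_le]
      constructor <;> push_cast <;> omega
    · rw [arcShift_of_le (not_lt.mp hi)]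
      simp
  · rw [Finset.sum_ite, Finset.sum_const_zero, Finset.sum_const, smul_eq_mul,
      Fin.card_filter_val_lt]
    omega

lemma arcSquare_extendChoice_injective (hR : 3 * R ≤ n) :
    Function.Injective fun χ : Fin R → Fin (n / 2) → Bool => arcSquare n R (extendChoice χ) := by
  intro χ χ' h
  funext a t
  have ha : 3 * (a : ℕ) < 3 * R := by omega
  have hentry := congrArg Fin.val <|
    congrFun (congrFun h ⟨3 * a, ha.trans_le hR⟩) ⟨2 * t, by omega⟩
  have hoff := arcOffset_le_two (χ a t) 0 0
  have hoff' := arcOffset_le_two (χ' a t) 0 0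
  simp only [arcSquare, arcShift, if_pos ha, extendChoice, Nat.mul_div_cancel_left _ three_pos,
    Nat.mul_div_cancel_left _ two_pos, Nat.mul_mod_right, Fin.eta, a.isLt, t.isLt, and_self,
    dite_true] at hentry
  exact arcOffset_zero_zero_injective <| by
    simpa using Nat.eq_of_add_mod_eq_add_mod (by omega) (by omega) hentry

theorem two_pow_le_card_transversalFree (hn : Even n) (hR : 12 * R < n) :
    2 ^ (n / 2 * R) ≤
      Nat.card {L : Fin n → Fin n → Fin n // IsLatinSquare L ∧ ¬ HasTransversal L} := by
  have hinj : Function.Injective fun χ : Fin R → Fin (n / 2) → Bool =>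
      (⟨arcSquare n R (extendChoice χ), arcSquare_isLatinSquare hn (by omega),
        arcSquare_not_hasTransversal hn hR⟩ :
        {L : Fin n → Fin n → Fin n // IsLatinSquare L ∧ ¬ HasTransversal L}) :=
    fun χ χ' h => arcSquare_extendChoice_injective (by omega) (congrArg Subtype.val h)
  calc 2 ^ (n / 2 * R) = Nat.card (Fin R → Fin (n / 2) → Bool) := by simp [pow_mul]
    _ ≤ _ := Nat.card_le_card_of_injective _ hinj

end ArcSquare

lemma six_mul_factorial_pow_three_le {n : ℕ} (hn : 3 ≤ n) : 6 * n.factorial ^ 3 ≤ n ^ (4 * n) := by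
  have h6 : 6 ≤ n ^ n := calc
    6 ≤ 3 ^ 3 := by norm_num
    _ ≤ n ^ n := (Nat.pow_le_pow_left hn 3).trans (Nat.pow_le_pow_right (by omega) hn)
  calc 6 * n.factorial ^ 3 ≤ n ^ n * (n ^ n) ^ 3 :=
        Nat.mul_le_mul h6 (Nat.pow_le_pow_left n.factorial_le_pow 3)
    _ = n ^ (4 * n) := by ring

lemma mul_add_le_mul_log_two {t : ℝ} {M : ℕ} (ht : 1024 ≤ t) (hM : t ^ 8 ≤ 104 * M) :
    4 * t * (t ^ 6 / 2 + 4 * t ^ 4) ≤ M * Real.log 2 := by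
  have h8 : 8 * t ^ 4 ≤ t ^ 6 := by
    rw [show t ^ 6 = t ^ 2 * t ^ 4 by ring]; gcongr; nlinarith
  have h7 : 1024 * t ^ 6 ≤ t ^ 7 := by
    rw [pow_succ t 6, mul_comm]; gcongr
  have hlog2 := Real.log_two_gt_d9
  calc 4 * t * (t ^ 6 / 2 + 4 * t ^ 4) ≤ 4 * t * (t ^ 7 / 1024) := by gcongr; linarith
    _ = t ^ 8 / 256 := by ring
    _ ≤ M * Real.log 2 := by nlinarith

/-- With `t = n ^ (1/4)`, all the quantities involved are powers of `t`, and `log n ≤ 4 t`. -/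
lemma rpow_mul_six_mul_factorial_pow_le_two_pow {n M : ℕ} (hn : 2 ^ 40 ≤ n)
    (hM : n ^ 2 ≤ 104 * M) :
    (n : ℝ) ^ ((1 / 2 : ℝ) * (n : ℝ) ^ ((3 : ℝ) / 2)) * (6 * (n.factorial : ℝ) ^ 3) ≤ 2 ^ M := by
  have hx : (0 : ℝ) < n := by positivity
  set t : ℝ := (n : ℝ) ^ ((1 : ℝ) / 4)
  have ht0 : 0 ≤ t := by positivity
  have hpow : ∀ k : ℕ, (n : ℝ) ^ ((k : ℝ) / 4) = t ^ k := fun k => by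
    rw [← Real.rpow_natCast, ← Real.rpow_mul hx.le]; ring_nf
  have hx4 : (n : ℝ) = t ^ 4 := by rw [← hpow 4]; norm_num
  have hx32 : (n : ℝ) ^ ((3 : ℝ) / 2) = t ^ 6 := by rw [← hpow 6]; norm_num
  have hlog : Real.log n ≤ 4 * t := by
    have := Real.log_le_rpow_div hx.le (by norm_num : (0 : ℝ) < 1 / 4)
    linarith
  have ht : 1024 ≤ t := by
    by_contra! ht
    have : (n : ℝ) < 2 ^ 40 := by
      rw [hx4]; calc t ^ 4 < 1024 ^ 4 := pow_lt_pow_left₀ ht ht0 (by norm_num)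
        _ = 2 ^ 40 := by norm_num
    exact absurd (by exact_mod_cast hn : (2 : ℝ) ^ 40 ≤ n) (not_le.mpr this)
  have hfact : 6 * (n.factorial : ℝ) ^ 3 ≤ (n : ℝ) ^ (4 * t ^ 4) := by
    rw [← hx4, show 4 * (n : ℝ) = ((4 * n : ℕ) : ℝ) by push_cast; rfl, Real.rpow_natCast]
    exact_mod_cast six_mul_factorial_pow_three_le (by omega)
  have hM' : t ^ 8 ≤ 104 * M := by
    rw [show t ^ 8 = (n : ℝ) ^ 2 by rw [hx4]; ring]; exact_mod_cast hM
  calc (n : ℝ) ^ ((1 / 2 : ℝ) * (n : ℝ) ^ ((3 : ℝ) / 2)) * (6 * (n.factorial : ℝ) ^ 3)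
      ≤ (n : ℝ) ^ (t ^ 6 / 2) * (n : ℝ) ^ (4 * t ^ 4) := by
        rw [hx32, mul_comm (1 / 2 : ℝ), ← div_eq_mul_one_div]; gcongr
    _ = Real.exp (Real.log n * (t ^ 6 / 2 + 4 * t ^ 4)) := by
        rw [← Real.rpow_add hx, Real.rpow_def_of_pos hx]
    _ ≤ Real.exp (M * Real.log 2) := Real.exp_le_exp.mpr <|
        (mul_le_mul_of_nonneg_right hlog (by positivity)).trans (mul_add_le_mul_log_two ht hM')
    _ = 2 ^ M := by rw [Real.exp_nat_mul, Real.exp_log two_pos]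

theorem stmt18 :
    ∀ ε : ℝ, 0 < ε → ∃ N : ℕ, ∀ n : ℕ, Even n → N ≤ n →
      (n : ℝ) ^ ((1 / 2 - ε) * (n : ℝ) ^ ((3 : ℝ) / 2)) ≤
        (Nat.card {L : Fin n → Fin n → Fin n //
          IsLatinSquare L ∧ ¬ HasTransversal L} : ℝ) ∧
      (n : ℝ) ^ ((1 / 2 - ε) * (n : ℝ) ^ ((3 : ℝ) / 2)) ≤
        (Nat.card (Quot (fun L₁ L₂ : {L : Fin n → Fin n → Fin n //
          IsLatinSquare L ∧ ¬ HasTransversal L} => SameSpecies L₁.1 L₂.1)) : ℝ) := by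
  intro ε hε
  refine ⟨2 ^ 40, fun n hn hN => ?_⟩
  have hM : n ^ 2 ≤ 104 * (n / 2 * (n / 13)) := by
    have ha : n ≤ 2 * (n / 2) + 1 := by omega
    have hb : n ≤ 13 * (n / 13) + 12 := by omega
    nlinarith
  have hcount : (2 : ℝ) ^ (n / 2 * (n / 13)) ≤
      Nat.card {L : Fin n → Fin n → Fin n // IsLatinSquare L ∧ ¬ HasTransversal L} := by
    exact_mod_cast two_pow_le_card_transversalFree hn (by omega)
  have hspecies := card_le_card_quot_sameSpecies_mul fun L : Fin n → Fin n → Fin n =>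
    IsLatinSquare L ∧ ¬ HasTransversal L
  have hgrowth := rpow_mul_six_mul_factorial_pow_le_two_pow hN hM
  have hε' : (n : ℝ) ^ ((1 / 2 - ε) * (n : ℝ) ^ ((3 : ℝ) / 2)) ≤
      (n : ℝ) ^ ((1 / 2 : ℝ) * (n : ℝ) ^ ((3 : ℝ) / 2)) :=
    Real.rpow_le_rpow_of_exponent_le (by exact_mod_cast (by omega : 1 ≤ n)) (by gcongr; linarith)
  have hB : (1 : ℝ) ≤ 6 * (n.factorial : ℝ) ^ 3 := by
    have := one_le_pow₀ (n := 3) (by exact_mod_cast n.factorial_pos : (1 : ℝ) ≤ n.factorial)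
    linarith
  constructor
  · refine hε'.trans (le_trans ?_ (hgrowth.trans hcount))
    exact le_mul_of_one_le_right (by positivity) hB
  · refine le_of_mul_le_mul_right ?_ (by linarith : (0 : ℝ) < 6 * (n.factorial : ℝ) ^ 3)
    calc _ ≤ _ := mul_le_mul_of_nonneg_right hε' (by positivity)
      _ ≤ _ := hgrowth.trans hcount
      _ ≤ _ := by exact_mod_cast hspecies
end
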